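/- arXiv:1309.4020 — 6 statements merged into one kernel-verified Lean document; each statement's English description precedes it below -/
import Mathlib

section
/- The sum of two C-finite sequences over a field is C-finite. -/
open Polynomial

noncomputable section CFiniteAux

variable {F : Type*} [Field F]

/-- The shift operator on sequences. -/
def cfShift (F : Type*) [Field F] : (ℕ → F) →ₗ[F] (ℕ → F) where
  toFun f := fun n => f (n + 1)
  map_add' := by intros; rfl
  map_smul' := by intros; rfl

lemma cfShift_pow (i : ℕ) (f : ℕ → F) (n : ℕ) :
    ((cfShift F) ^ i) f n = f (n + i) := by
  induction i generalizing f n with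
  | zero => rfl
  | succ k ih =>
    rw [pow_succ']
    show ((cfShift F) ^ k) f (n + 1) = _
    rw [ih]
    congr 1; omega

lemma aeval_cfShift_apply (p : F[X]) (f : ℕ → F) (n : ℕ) :
    (Polynomial.aeval (cfShift F) p) f n
      = ∑ i ∈ Finset.range (p.natDegree + 1), p.coeff i * f (n + i) := by
  rw [Polynomial.aeval_eq_sum_range]
  simp [LinearMap.sum_apply, cfShift_pow]

/-- The annihilating polynomial built from the recurrence data. -/
def cfPoly {s : ℕ} (c : Fin s → F) : F[X] :=
  X ^ s - ∑ i : Fin s, C (c i) * X ^ (i : ℕ)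

lemma cfPoly_degree_lt {s : ℕ} (c : Fin s → F) :
    (∑ i : Fin s, C (c i) * X ^ (i : ℕ)).degree < (s : WithBot ℕ) := by
  refine lt_of_le_of_lt (Polynomial.degree_sum_le _ _) ?_
  refine (Finset.sup_lt_iff (WithBot.bot_lt_coe s)).mpr fun i _ => ?_
  refine lt_of_le_of_lt (Polynomial.degree_C_mul_X_pow_le _ _) ?_
  exact Nat.cast_lt.mpr i.isLt

lemma cfPoly_monic {s : ℕ} (c : Fin s → F) : (cfPoly c).Monic := by
  apply (Polynomial.monic_X_pow s).sub_of_left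
  simpa [Polynomial.degree_X_pow] using cfPoly_degree_lt c

lemma cfPoly_natDegree {s : ℕ} (c : Fin s → F) : (cfPoly c).natDegree = s := by
  have h : (cfPoly c).degree = (s : WithBot ℕ) := by
    rw [cfPoly, Polynomial.degree_sub_eq_left_of_degree_lt]
    · exact Polynomial.degree_X_pow s
    · simpa [Polynomial.degree_X_pow] using cfPoly_degree_lt c
  exact Polynomial.natDegree_eq_of_degree_eq_some h

lemma cfPoly_annihilates {s : ℕ} (c : Fin s → F) (a : ℕ → F)
    (hc : ∀ n : ℕ, s ≤ n → a (n + s) = ∑ i : Fin s, c i * a (n + i)) :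
    ∀ n : ℕ, s ≤ n → (Polynomial.aeval (cfShift F) (cfPoly c)) a n = 0 := by
  intro n hn
  have : (Polynomial.aeval (cfShift F) (cfPoly c)) a n
      = a (n + s) - ∑ i : Fin s, c i * a (n + i) := by
    rw [cfPoly]
    simp [map_sub, map_sum, LinearMap.sub_apply, LinearMap.sum_apply,
      cfShift_pow, Algebra.smul_def]
  rw [this, hc n hn, sub_self]

end CFiniteAux

def IsCFinite {F : Type*} [Field F] (a : ℕ → F) : Prop :=
  ∃ s : ℕ, ∃ c : Fin s → F,
    ∀ n : ℕ, s ≤ n → a (n + s) = ∑ i : Fin s, c i * a (n + i)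

theorem cfinite_add {F : Type*} [Field F] (a b : ℕ → F)
    (ha : IsCFinite a) (hb : IsCFinite b) : IsCFinite (fun n => a n + b n) := by
  obtain ⟨s, c, hc⟩ := ha
  obtain ⟨t, d, hd⟩ := hb
  set S := cfShift F
  set p := cfPoly c with hp
  set q := cfPoly d with hq
  have hpa : ∀ n : ℕ, s ≤ n → (Polynomial.aeval S p) a n = 0 :=
    cfPoly_annihilates c a hc
  have hqb : ∀ n : ℕ, t ≤ n → (Polynomial.aeval S q) b n = 0 :=
    cfPoly_annihilates d b hd
  have hmon : (p * q).Monic := (cfPoly_monic c).mul (cfPoly_monic d)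
  have hdeg : (p * q).natDegree = s + t := by
    rw [(cfPoly_monic c).natDegree_mul (cfPoly_monic d), cfPoly_natDegree, cfPoly_natDegree]
  -- the product annihilates a + b for n ≥ s + t
  have key : ∀ n : ℕ, s + t ≤ n → (Polynomial.aeval S (p * q)) (a + b) n = 0 := by
    intro n hn
    have h1 : (Polynomial.aeval S (p * q)) (a + b)
        = (Polynomial.aeval S (p * q)) a + (Polynomial.aeval S (p * q)) b :=
      map_add _ a b
    have h2 : (Polynomial.aeval S (p * q)) a n = 0 := by
      have : Polynomial.aeval S (p * q) = Polynomial.aeval S q * Polynomial.aeval S p := by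
        rw [mul_comm p q, map_mul]
      rw [this]
      show (Polynomial.aeval S q) ((Polynomial.aeval S p) a) n = 0
      rw [aeval_cfShift_apply]
      refine Finset.sum_eq_zero fun i _ => ?_
      rw [hpa (n + i) (by omega), mul_zero]
    have h3 : (Polynomial.aeval S (p * q)) b n = 0 := by
      rw [map_mul]
      show (Polynomial.aeval S p) ((Polynomial.aeval S q) b) n = 0
      rw [aeval_cfShift_apply]
      refine Finset.sum_eq_zero fun i _ => ?_
      rw [hqb (n + i) (by omega), mul_zero]
    rw [h1, Pi.add_apply, h2, h3, add_zero]
  refine ⟨s + t, fun i => -((p * q).coeff i), fun n hn => ?_⟩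
  have h0 := key n hn
  rw [aeval_cfShift_apply, hdeg, Finset.sum_range_succ] at h0
  have hlead : (p * q).coeff (s + t) = 1 := by
    have := hmon.coeff_natDegree
    rwa [hdeg] at this
  rw [hlead, one_mul] at h0
  have hab : (a + b) (n + (s + t)) = -∑ i ∈ Finset.range (s + t), (p * q).coeff i * (a + b) (n + i) := by
    linear_combination h0
  show a (n + (s + t)) + b (n + (s + t)) = _
  calc a (n + (s + t)) + b (n + (s + t)) = (a + b) (n + (s + t)) := rfl
    _ = -∑ i ∈ Finset.range (s + t), (p * q).coeff i * (a + b) (n + i) := hab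
    _ = ∑ i ∈ Finset.range (s + t), -((p * q).coeff i) * (a + b) (n + i) := by
        rw [← Finset.sum_neg_distrib]; congr 1; ext i; ring
    _ = ∑ i : Fin (s + t), -((p * q).coeff i) * (a (n + i) + b (n + i)) :=
        (Fin.sum_univ_eq_sum_range (fun i => -((p * q).coeff i) * (a (n + i) + b (n + i))) (s + t)).symm
end

section
/- The pointwise product of two C-finite sequences over a field is C-finite. -/
namespace CFiniteAux

variable {F : Type*} [Field F]

/-- Shift of a sequence by `k`. -/
def sh (k : ℕ) (f : ℕ → F) : ℕ → F := fun n => f (n + k)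

/-- An eventual linear recurrence implies `IsCFinite` (by padding with zeros). -/
lemma pad (a : ℕ → F) (r N : ℕ) (c : Fin r → F)
    (h : ∀ n, N ≤ n → a (n + r) = ∑ i : Fin r, c i * a (n + i)) :
    IsCFinite a := by
  classical
  set cc : ℕ → F := fun i => if h : N ≤ i ∧ i - N < r then c ⟨i - N, h.2⟩ else 0 with hcc
  refine ⟨N + r, fun i => cc i, fun n hn => ?_⟩
  have h1 : a (n + (N + r)) = ∑ i : Fin r, c i * a (n + N + i) := by
    have := h (n + N) (by omega)
    rw [show n + (N + r) = n + N + r by omega, this]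
  have h2 : ∑ i ∈ Finset.range (N + r), cc i * a (n + i)
      = ∑ i ∈ Finset.Ico N (N + r), cc i * a (n + i) := by
    symm
    refine Finset.sum_subset (fun x hx => ?_) (fun x hx hx' => ?_)
    · simp only [Finset.mem_Ico] at hx
      simp only [Finset.mem_range]; omega
    · simp only [Finset.mem_range] at hx
      simp only [Finset.mem_Ico, not_and, not_le] at hx'
      have : ¬ (N ≤ x ∧ x - N < r) := by omega
      simp [hcc, this]
  have h3 : ∀ i : Fin r, c i = cc (N + i) := by
    intro i
    have hcond : N ≤ N + (i : ℕ) ∧ N + (i : ℕ) - N < r := by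
      constructor
      · omega
      · have := i.2; omega
    simp only [hcc, dif_pos hcond]
    congr 1
    apply Fin.ext
    simp only [Fin.val_mk]
    omega
  rw [h1]
  calc ∑ i : Fin r, c i * a (n + N + i)
      = ∑ i : Fin r, cc (N + (i : ℕ)) * a (n + (N + (i : ℕ))) := by
        refine Finset.sum_congr rfl fun i _ => ?_
        rw [← h3 i, add_assoc]
    _ = ∑ i ∈ Finset.range r, cc (N + i) * a (n + (N + i)) :=
        Fin.sum_univ_eq_sum_range (fun i => cc (N + i) * a (n + (N + i))) r
    _ = ∑ i ∈ Finset.Ico N (N + r), cc i * a (n + i) := by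
        rw [Finset.sum_Ico_eq_sum_range, show N + r - N = r by omega]
    _ = ∑ i ∈ Finset.range (N + r), cc i * a (n + i) := h2.symm
    _ = ∑ i : Fin (N + r), cc i * a (n + i) :=
        (Fin.sum_univ_eq_sum_range (fun i => cc i * a (n + i)) (N + r)).symm

/-- All shifts of a sequence satisfying a (global) linear recurrence of order `s`
lie in the span of the first `s` shifts. -/
lemma sh_mem {s : ℕ} {A : ℕ → F} {c : Fin s → F}
    (hA : ∀ n, A (n + s) = ∑ i : Fin s, c i * A (n + i)) (k : ℕ) :
    sh k A ∈ Submodule.span F (Set.range fun i : Fin s => sh (i : ℕ) A) := by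
  induction k using Nat.strong_induction_on with
  | _ k ih =>
    by_cases hk : k < s
    · exact Submodule.subset_span ⟨⟨k, hk⟩, rfl⟩
    · rcases Nat.eq_zero_or_pos s with hs | hs
      · subst hs
        have hA0 : ∀ m : ℕ, A m = 0 := fun m => by simpa using hA m
        have : sh k A = 0 := funext fun n => hA0 _
        rw [this]; exact zero_mem _
      · have hk' : s ≤ k := le_of_not_gt hk
        have hrw : sh k A = ∑ i : Fin s, c i • sh (k - s + (i : ℕ)) A := by
          funext n
          simp only [sh, Finset.sum_apply, Pi.smul_apply, smul_eq_mul]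
          calc A (n + k) = A (n + (k - s) + s) := by congr 1; omega
            _ = ∑ i : Fin s, c i * A (n + (k - s) + (i : ℕ)) := hA _
            _ = ∑ i : Fin s, c i * A (n + (k - s + (i : ℕ))) := by
                refine Finset.sum_congr rfl fun i _ => ?_
                rw [add_assoc]
        rw [hrw]
        exact Submodule.sum_mem _ fun i _ =>
          Submodule.smul_mem _ _ (ih _ (by have := i.2; omega))

end CFiniteAux

theorem cfinite_mul {F : Type*} [Field F] (a b : ℕ → F)
    (ha : IsCFinite a) (hb : IsCFinite b) : IsCFinite (fun n => a n * b n) := by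
  classical
  open CFiniteAux in
  obtain ⟨s, c, hc⟩ := ha
  obtain ⟨t, d, hd⟩ := hb
  set u := max s t with hu
  set A : ℕ → F := fun n => a (n + u) with hAdef
  set B : ℕ → F := fun n => b (n + u) with hBdef
  -- the shifted sequences satisfy their recurrences globally
  have hA : ∀ n, A (n + s) = ∑ i : Fin s, c i * A (n + i) := by
    intro n
    show a (n + s + u) = ∑ i : Fin s, c i * a (n + (i : ℕ) + u)
    rw [show n + s + u = (n + u) + s by omega, hc (n + u) (by omega)]
    exact Finset.sum_congr rfl fun i _ => by rw [show n + u + (i:ℕ) = n + (i:ℕ) + u by omega]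
  have hB : ∀ n, B (n + t) = ∑ i : Fin t, d i * B (n + i) := by
    intro n
    show b (n + t + u) = ∑ i : Fin t, d i * b (n + (i : ℕ) + u)
    rw [show n + t + u = (n + u) + t by omega, hd (n + u) (by omega)]
    exact Finset.sum_congr rfl fun i _ => by rw [show n + u + (i:ℕ) = n + (i:ℕ) + u by omega]
  set UA := Submodule.span F (Set.range fun i : Fin s => sh (i : ℕ) A) with hUA
  set UB := Submodule.span F (Set.range fun i : Fin t => sh (i : ℕ) B) with hUB
  set W := Submodule.span F
      (Set.range fun p : Fin s × Fin t => sh (p.1 : ℕ) A * sh (p.2 : ℕ) B) with hW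
  have hmulW : ∀ x ∈ UA, ∀ y ∈ UB, x * y ∈ W := by
    intro x hx y hy
    have h1 : x * y ∈ UA * UB := Submodule.mul_mem_mul hx hy
    have h2 : UA * UB ≤ W := by
      rw [hUA, hUB, Submodule.span_mul_span]
      refine Submodule.span_le.2 ?_
      rintro z hz
      rw [Set.mem_mul] at hz
      obtain ⟨x', ⟨i, rfl⟩, y', ⟨j, rfl⟩, rfl⟩ := hz
      exact Submodule.subset_span ⟨(i, j), rfl⟩
    exact h2 h1
  set P : ℕ → F := fun n => A n * B n with hPdef
  have hvW : ∀ k : ℕ, sh k P ∈ W := by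
    intro k
    have : sh k P = sh k A * sh k B := rfl
    rw [this]
    exact hmulW _ (sh_mem hA k) _ (sh_mem hB k)
  set D := s * t with hD
  haveI : FiniteDimensional F W :=
    FiniteDimensional.span_of_finite F (Set.finite_range _)
  have hfr : Module.finrank F W ≤ D := by
    have := finrank_range_le_card (R := F)
      (fun p : Fin s × Fin t => sh (p.1 : ℕ) A * sh (p.2 : ℕ) B)
    simpa [Set.finrank, hD] using this
  have hnli : ¬ LinearIndependent F (fun k : Fin (D + 1) => (⟨sh k P, hvW k⟩ : W)) := by
    intro hli
    have := hli.fintype_card_le_finrank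
    simp only [Fintype.card_fin] at this
    omega
  obtain ⟨g, hg0, i0, hi0⟩ := Fintype.not_linearIndependent_iff.1 hnli
  have hg0' : ∀ n : ℕ, ∑ k : Fin (D + 1), g k * P (n + k) = 0 := by
    intro n
    have h1 := congrArg (fun w : W => (w : ℕ → F) n) hg0
    simpa [sh, Submodule.coe_sum] using h1
  -- largest index with nonzero coefficient
  set T := Finset.univ.filter (fun k : Fin (D + 1) => g k ≠ 0) with hT
  have hTne : T.Nonempty := ⟨i0, by simp [hT, hi0]⟩
  set r := T.max' hTne with hr
  have hgr : g r ≠ 0 := (Finset.mem_filter.1 (T.max'_mem hTne)).2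
  have htop : ∀ k : Fin (D + 1), (r : ℕ) < (k : ℕ) → g k = 0 := by
    intro k hk
    by_contra h
    have hmem : k ∈ T := by simp [hT, h]
    have := T.le_max' k hmem
    rw [← hr] at this
    exact absurd this (by rw [Fin.le_def]; omega)
  set gg : ℕ → F := fun k => if h : k < D + 1 then g ⟨k, h⟩ else 0 with hgg
  have hggval : ∀ k : Fin (D + 1), gg (k : ℕ) = g k := by
    intro k; simp [hgg, k.2]
    exact fun h => absurd k.2 (by omega)
  set cg : Fin (r : ℕ) → F := fun i => -(gg (i : ℕ) / g r) with hcg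
  have key : ∀ n : ℕ, P (n + (r : ℕ)) = ∑ i : Fin (r : ℕ), cg i * P (n + i) := by
    intro n
    have h1 : ∑ k ∈ Finset.range (D + 1), gg k * P (n + k) = 0 := by
      rw [← Fin.sum_univ_eq_sum_range (fun k => gg k * P (n + k)) (D + 1)]
      rw [← hg0' n]
      exact Finset.sum_congr rfl fun k _ => by rw [hggval]
    have h2 : ∑ k ∈ Finset.range ((r : ℕ) + 1), gg k * P (n + k) = 0 := by
      rw [← h1]
      refine Finset.sum_subset (fun x hx => ?_) (fun x hx hx' => ?_)
      · simp only [Finset.mem_range] at hx ⊢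
        have := r.2; omega
      · simp only [Finset.mem_range] at hx hx'
        have : gg x = 0 := by
          rw [hgg]; simp only [dif_pos hx]
          exact htop ⟨x, hx⟩ (by simpa using by omega)
        rw [this, zero_mul]
    rw [Finset.sum_range_succ] at h2
    have h3 : gg (r : ℕ) = g r := hggval r
    rw [h3] at h2
    have h4 : P (n + (r : ℕ)) =
        ∑ k ∈ Finset.range (r : ℕ), -(gg k / g r) * P (n + k) := by
      have e : ∑ k ∈ Finset.range (r : ℕ), -(gg k / g r) * P (n + k)
          = (g r)⁻¹ * ∑ k ∈ Finset.range (r : ℕ), -(gg k * P (n + k)) := by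
        rw [Finset.mul_sum]
        refine Finset.sum_congr rfl fun k _ => ?_
        field_simp
      have e2 : ∑ k ∈ Finset.range (r : ℕ), -(gg k * P (n + k))
          = g r * P (n + (r : ℕ)) := by
        rw [Finset.sum_neg_distrib]
        linear_combination -h2
      rw [e, e2, ← mul_assoc, inv_mul_cancel₀ hgr, one_mul]
    rw [h4]
    rw [← Fin.sum_univ_eq_sum_range (fun k => -(gg k / g r) * P (n + k)) (r : ℕ)]
  -- translate back to a·b
  refine pad (fun n => a n * b n) (r : ℕ) u cg ?_
  intro m hm
  have hP : ∀ k : ℕ, P (m - u + k) = a (m + k) * b (m + k) := by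
    intro k
    show a (m - u + k + u) * b (m - u + k + u) = a (m + k) * b (m + k)
    rw [show m - u + k + u = m + k by omega]
  have := key (m - u)
  rw [hP] at this
  simp only [hP] at this
  exact this
end

section
/- If (A_n) is a C-finite matrix sequence of r × r matrices over ℂ, then the sequence of determinants n ↦ det(A_n) is a C-finite sequence. -/
open Finset

/-- Internal notion: `f` eventually satisfies a linear recurrence of order `m`. -/
def RecSeq (f : ℕ → ℂ) (m : ℕ) (μ : ℕ → ℂ) (N : ℕ) : Prop :=
  ∀ n, N ≤ n → f (n + m) = ∑ k ∈ Finset.range m, μ k * f (n + k)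

def PreCF (f : ℕ → ℂ) : Prop := ∃ m μ N, RecSeq f m μ N

lemma preCF_of_isCFinite {f : ℕ → ℂ} (h : IsCFinite f) : PreCF f := by
  obtain ⟨s, c, hc⟩ := h
  refine ⟨s, fun j => if h : j < s then c ⟨j, h⟩ else 0, s, fun n hn => ?_⟩
  show f (n + s) = ∑ k ∈ range s, (if h : k < s then c ⟨k, h⟩ else 0) * f (n + k)
  rw [hc n hn, ← Fin.sum_univ_eq_sum_range
    (fun k => (if h : k < s then c ⟨k, h⟩ else 0) * f (n + k)) s]
  exact Finset.sum_congr rfl fun i _ => by simp [i.isLt]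

lemma sum_range_shift (g : ℕ → ℂ) (N m : ℕ) (h0 : ∀ j < N, g j = 0) :
    ∑ j ∈ range (N + m), g j = ∑ k ∈ range m, g (N + k) := by
  induction m with
  | zero => simpa using Finset.sum_eq_zero (fun j hj => h0 j (Finset.mem_range.mp hj))
  | succ m ih =>
    rw [show N + (m + 1) = (N + m) + 1 by ring, Finset.sum_range_succ, ih,
      Finset.sum_range_succ]

lemma isCFinite_of_preCF {f : ℕ → ℂ} (h : PreCF f) : IsCFinite f := by
  obtain ⟨m, μ, N, h⟩ := h
  refine ⟨N + m, fun i => if N ≤ (i : ℕ) then μ ((i : ℕ) - N) else 0, fun n hn => ?_⟩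
  rw [Fin.sum_univ_eq_sum_range
    (fun j => (if N ≤ j then μ (j - N) else 0) * f (n + j)) (N + m)]
  have h1 : f (n + (N + m)) = ∑ k ∈ range m, μ k * f (n + N + k) := by
    have := h (n + N) (by omega)
    rw [show n + (N + m) = n + N + m by ring]; exact this
  rw [h1, sum_range_shift (fun j => (if N ≤ j then μ (j - N) else 0) * f (n + j)) N m
    (fun j hj => by
      show (if N ≤ j then μ (j - N) else 0) * f (n + j) = 0
      rw [if_neg (by omega), zero_mul])]
  refine Finset.sum_congr rfl fun k _ => ?_
  rw [if_pos (Nat.le_add_right N k), Nat.add_sub_cancel_left,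
    show n + (N + k) = n + N + k by ring]

lemma RecSeq.shift {f : ℕ → ℂ} {m : ℕ} {μ : ℕ → ℂ} {N : ℕ} (h : RecSeq f m μ N) (k : ℕ) :
    ∃ w : ℕ → ℂ, ∀ n, N ≤ n → f (n + k) = ∑ i ∈ range m, w i * f (n + i) := by
  rcases Nat.eq_zero_or_pos m with hm | hm
  · subst hm
    refine ⟨0, fun n hn => ?_⟩
    have := h (n + k) (by omega)
    simpa using this
  · induction k with
    | zero =>
      refine ⟨fun i => if i = 0 then 1 else 0, fun n hn => ?_⟩
      simp only [ite_mul, one_mul, zero_mul]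
      rw [Finset.sum_ite_eq' (range m) 0 (fun i => f (n + i))]
      simp [hm]
    | succ k ih =>
      obtain ⟨w, hw⟩ := ih
      obtain ⟨m', rfl⟩ : ∃ m', m = m' + 1 := ⟨m - 1, by omega⟩
      refine ⟨fun j => (if 1 ≤ j then w (j - 1) else 0) + w m' * μ j, fun n hn => ?_⟩
      have h1 : f (n + (k + 1)) = ∑ i ∈ range (m' + 1), w i * f ((n + 1) + i) := by
        rw [show n + (k + 1) = n + 1 + k by ring]
        exact hw (n + 1) (by omega)
      rw [h1, Finset.sum_range_succ]
      have h2 : f (n + 1 + m') = ∑ j ∈ range (m' + 1), μ j * f (n + j) := by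
        rw [show n + 1 + m' = n + (m' + 1) by ring]
        exact h n hn
      rw [h2]
      simp only [add_mul, Finset.sum_add_distrib]
      congr 1
      · rw [Finset.sum_range_succ' (fun j => (if 1 ≤ j then w (j - 1) else 0) * f (n + j)) m']
        simp only [Nat.le_add_left 1, if_true, Nat.add_sub_cancel, if_neg (by omega : ¬ (1:ℕ) ≤ 0),
          zero_mul, add_zero]
        refine Finset.sum_congr rfl fun i _ => ?_
        rw [show n + 1 + i = n + (i + 1) by ring]
      · rw [Finset.mul_sum]
        refine Finset.sum_congr rfl fun j _ => by ring

lemma exists_dep {ι : Type*} [Fintype ι] {d : ℕ} (hd : Fintype.card ι ≤ d)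
    (u : Fin (d + 1) → ι → ℂ) :
    ∃ g : Fin (d + 1) → ℂ, (∃ k, g k ≠ 0) ∧ ∀ i, ∑ k, g k * u k i = 0 := by
  have hni : ¬ LinearIndependent ℂ u := by
    intro hli
    have := hli.fintype_card_le_finrank
    rw [Module.finrank_pi] at this
    simp only [Fintype.card_fin] at this
    omega
  obtain ⟨g, hsum, k, hk⟩ := Fintype.not_linearIndependent_iff.mp hni
  refine ⟨g, ⟨k, hk⟩, fun i => ?_⟩
  have := congrFun hsum i
  simpa [Finset.sum_apply] using this

lemma preCF_of_dep {f : ℕ → ℂ} {N : ℕ} :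
    ∀ (D : ℕ) (g : ℕ → ℂ), (∃ k, k ≤ D ∧ g k ≠ 0) →
      (∀ n, N ≤ n → ∑ k ∈ range (D + 1), g k * f (n + k) = 0) → PreCF f := by
  intro D
  induction D with
  | zero =>
    rintro g ⟨k, hk, hg⟩ h
    interval_cases k
    refine ⟨0, 0, N, fun n hn => ?_⟩
    have := h n hn
    simp only [zero_add, Finset.sum_range_one, Nat.add_zero] at this
    have hf : f n = 0 := by
      rcases mul_eq_zero.mp this with h' | h'
      · exact absurd h' hg
      · exact h'
    simpa using hf
  | succ D ih =>
    rintro g ⟨k, hk, hg⟩ h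
    by_cases hD : g (D + 1) = 0
    · refine ih g ⟨k, ?_, hg⟩ fun n hn => ?_
      · rcases Nat.lt_or_ge k (D + 1) with h' | h'
        · omega
        · exact absurd (by rw [show k = D + 1 by omega]; exact hD) hg
      · have := h n hn
        rw [Finset.sum_range_succ, hD, zero_mul, add_zero] at this
        exact this
    · refine ⟨D + 1, fun k => -(g (D + 1))⁻¹ * g k, N, fun n hn => ?_⟩
      have h1 := h n hn
      rw [Finset.sum_range_succ] at h1
      have h2 : ∑ k ∈ range (D + 1), g k * f (n + k) = -(g (D + 1) * f (n + (D + 1))) :=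
        eq_neg_of_add_eq_zero_left h1
      have h3 : ∑ k ∈ range (D + 1), (-(g (D + 1))⁻¹ * g k) * f (n + k)
          = -(g (D + 1))⁻¹ * ∑ k ∈ range (D + 1), g k * f (n + k) := by
        rw [Finset.mul_sum]
        exact Finset.sum_congr rfl fun k _ => by ring
      rw [h3, h2]
      field_simp

lemma preCF_of_span {ι : Type*} [Fintype ι] {f : ℕ → ℂ} (G : ι → ℕ → ℂ) (N : ℕ)
    (h : ∀ k : ℕ, ∃ w : ι → ℂ, ∀ n, N ≤ n → f (n + k) = ∑ i, w i * G i n) : PreCF f := by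
  classical
  set d := Fintype.card ι with hd
  choose w hw using h
  obtain ⟨g, ⟨k0, hk0⟩, hgdep⟩ := exists_dep (le_refl d) (fun k : Fin (d + 1) => w (k : ℕ))
  set g' : ℕ → ℂ := fun k => if h : k < d + 1 then g ⟨k, h⟩ else 0 with hg'
  refine preCF_of_dep (N := N) d g' ⟨k0, by omega, by simpa [hg', k0.isLt, Nat.lt_succ_iff.mp k0.isLt] using hk0⟩ fun n hn => ?_
  have h1 : ∑ k ∈ range (d + 1), g' k * f (n + k) = ∑ k : Fin (d + 1), g k * f (n + (k : ℕ)) := by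
    rw [← Fin.sum_univ_eq_sum_range (fun k => g' k * f (n + k)) (d + 1)]
    refine Finset.sum_congr rfl fun k _ => ?_
    simp [hg', k.isLt, not_lt.mpr (Nat.lt_succ_iff.mp k.isLt)]
  rw [h1]
  have h2 : ∀ k : Fin (d + 1), f (n + (k : ℕ)) = ∑ i, w (k : ℕ) i * G i n :=
    fun k => hw (k : ℕ) n hn
  calc ∑ k : Fin (d + 1), g k * f (n + (k : ℕ))
      = ∑ k : Fin (d + 1), ∑ i, g k * (w (k : ℕ) i * G i n) := by
        refine Finset.sum_congr rfl fun k _ => ?_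
        rw [h2 k, Finset.mul_sum]
    _ = ∑ i, (∑ k : Fin (d + 1), g k * w (k : ℕ) i) * G i n := by
        rw [Finset.sum_comm]
        refine Finset.sum_congr rfl fun i _ => ?_
        rw [Finset.sum_mul]
        exact Finset.sum_congr rfl fun k _ => by ring
    _ = 0 := by
        refine Finset.sum_eq_zero fun i _ => ?_
        rw [hgdep i, zero_mul]

lemma preCF_mul {a b : ℕ → ℂ} (ha : PreCF a) (hb : PreCF b) :
    PreCF (fun n => a n * b n) := by
  obtain ⟨s, c, N₁, ha⟩ := ha
  obtain ⟨t, e, N₂, hb⟩ := hb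
  refine preCF_of_span (ι := Fin s × Fin t)
    (fun p n => a (n + (p.1 : ℕ)) * b (n + (p.2 : ℕ))) (max N₁ N₂) fun k => ?_
  obtain ⟨w, hwa⟩ := ha.shift k
  obtain ⟨v, hvb⟩ := hb.shift k
  refine ⟨fun p => w (p.1 : ℕ) * v (p.2 : ℕ), fun n hn => ?_⟩
  have h1 : a (n + k) = ∑ i : Fin s, w (i : ℕ) * a (n + (i : ℕ)) := by
    rw [hwa n (le_trans (le_max_left _ _) hn),
      ← Fin.sum_univ_eq_sum_range (fun i => w i * a (n + i)) s]
  have h2 : b (n + k) = ∑ j : Fin t, v (j : ℕ) * b (n + (j : ℕ)) := by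
    rw [hvb n (le_trans (le_max_right _ _) hn),
      ← Fin.sum_univ_eq_sum_range (fun j => v j * b (n + j)) t]
  rw [h1, h2, Finset.sum_mul_sum, Fintype.sum_prod_type]
  refine Finset.sum_congr rfl fun i _ => Finset.sum_congr rfl fun j _ => by ring

lemma preCF_add {a b : ℕ → ℂ} (ha : PreCF a) (hb : PreCF b) :
    PreCF (fun n => a n + b n) := by
  obtain ⟨s, c, N₁, ha⟩ := ha
  obtain ⟨t, e, N₂, hb⟩ := hb
  refine preCF_of_span (ι := Fin s ⊕ Fin t)
    (Sum.elim (fun i n => a (n + (i : ℕ))) (fun j n => b (n + (j : ℕ)))) (max N₁ N₂) fun k => ?_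
  obtain ⟨w, hwa⟩ := ha.shift k
  obtain ⟨v, hvb⟩ := hb.shift k
  refine ⟨Sum.elim (fun i => w (i : ℕ)) (fun j => v (j : ℕ)), fun n hn => ?_⟩
  rw [Fintype.sum_sum_type]
  have h1 : a (n + k) = ∑ i : Fin s, w (i : ℕ) * a (n + (i : ℕ)) := by
    rw [hwa n (le_trans (le_max_left _ _) hn),
      ← Fin.sum_univ_eq_sum_range (fun i => w i * a (n + i)) s]
  have h2 : b (n + k) = ∑ j : Fin t, v (j : ℕ) * b (n + (j : ℕ)) := by
    rw [hvb n (le_trans (le_max_right _ _) hn),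
      ← Fin.sum_univ_eq_sum_range (fun j => v j * b (n + j)) t]
  rw [h1, h2]
  rfl

lemma preCF_const (c : ℂ) : PreCF (fun _ => c) := by
  refine ⟨1, fun _ => 1, 0, fun n _ => ?_⟩
  simp

lemma preCF_smul (c : ℂ) {f : ℕ → ℂ} (hf : PreCF f) : PreCF (fun n => c * f n) := by
  obtain ⟨m, μ, N, hf⟩ := hf
  refine ⟨m, μ, N, fun n hn => ?_⟩
  show c * f (n + m) = ∑ k ∈ range m, μ k * (c * f (n + k))
  rw [hf n hn, Finset.mul_sum]
  exact Finset.sum_congr rfl fun k _ => by ring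

lemma preCF_sum {ι : Type*} (s : Finset ι) (f : ι → ℕ → ℂ)
    (h : ∀ i ∈ s, PreCF (f i)) : PreCF (fun n => ∑ i ∈ s, f i n) := by
  classical
  induction s using Finset.induction_on with
  | empty =>
    simp only [Finset.sum_empty]
    exact preCF_const 0
  | insert i s' hnotmem ih =>
    simp only [Finset.sum_insert hnotmem]
    exact preCF_add (h i (Finset.mem_insert_self i s'))
      (ih fun j hj => h j (Finset.mem_insert_of_mem hj))

lemma preCF_prod {ι : Type*} (s : Finset ι) (f : ι → ℕ → ℂ)
    (h : ∀ i ∈ s, PreCF (f i)) : PreCF (fun n => ∏ i ∈ s, f i n) := by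
  classical
  induction s using Finset.induction_on with
  | empty =>
    simp only [Finset.prod_empty]
    exact preCF_const 1
  | insert i s' hnotmem ih =>
    simp only [Finset.prod_insert hnotmem]
    exact preCF_mul (h i (Finset.mem_insert_self i s'))
      (ih fun j hj => h j (Finset.mem_insert_of_mem hj))

theorem cfinite_matrix_det (r : ℕ) (A : ℕ → Matrix (Fin r) (Fin r) ℂ)
    (hA : ∀ i j, IsCFinite (fun n => A n i j)) :
    IsCFinite (fun n => (A n).det) := by
  apply isCFinite_of_preCF
  have hdet : (fun n => (A n).det)
      = fun n => ∑ σ ∈ (Finset.univ : Finset (Equiv.Perm (Fin r))),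
          ((Equiv.Perm.sign σ : ℤ) : ℂ) * ∏ i, A n (σ i) i := by
    funext n
    rw [Matrix.det_apply']
  rw [hdet]
  refine preCF_sum _ _ fun σ _ => ?_
  exact preCF_smul _ (preCF_prod _ _ fun i _ => preCF_of_isCFinite (hA (σ i) i))
end

section
/- Let (a_n) be a C-finite sequence over ℂ, and let c ∈ ℕ with c ≥ 1 and d, e ∈ ℤ such that c·C(n,2) + d·n + e ≥ 0 for all n. Then the sequence b_n = a_{c·C(n,2) + d·n + e} is C²-finite, where C(n,2) = n(n-1)/2. -/
def IsC2Finite (a : ℕ → ℂ) : Prop :=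
  ∃ s : ℕ, ∃ c : Fin (s + 1) → ℕ → ℂ,
    (∀ i, IsCFinite (c i)) ∧ (∀ n, c (Fin.last s) n ≠ 0) ∧
    ∀ n : ℕ, s ≤ n →
      c (Fin.last s) n * a (n + s) = ∑ i : Fin s, c i.castSucc n * a (n + i)

open Polynomial

noncomputable section


def gval (L : List (ℂ × ℂ)) (n : ℕ) : ℂ := (L.map fun t => t.1 * t.2 ^ n).sum

@[simp] lemma gval_nil (n : ℕ) : gval [] n = 0 := rfl

@[simp] lemma gval_cons (t : ℂ × ℂ) (L : List (ℂ × ℂ)) (n : ℕ) :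
    gval (t :: L) n = t.1 * t.2 ^ n + gval L n := by simp [gval]

@[simp] lemma gval_append (L1 L2 : List (ℂ × ℂ)) (n : ℕ) :
    gval (L1 ++ L2) n = gval L1 n + gval L2 n := by simp [gval]

lemma gval_smul (a ρ : ℂ) (L : List (ℂ × ℂ)) (n : ℕ) :
    gval (L.map fun t => (a * t.1, ρ * t.2)) n = a * ρ ^ n * gval L n := by
  induction L with
  | nil => simp
  | cons t L ih => simp [ih, mul_pow]; ring

def GeomSum (f : ℕ → ℂ) : Prop := ∃ L : List (ℂ × ℂ), ∀ n, f n = gval L n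

lemma geomSum_geo (A r : ℂ) : GeomSum (fun n => A * r ^ n) := ⟨[(A, r)], by simp⟩

lemma geomSum_const (k : ℂ) : GeomSum (fun _ => k) := ⟨[(k, 1)], by simp⟩

lemma geomSum_zero : GeomSum (fun _ => 0) := ⟨[], by simp⟩

lemma geomSum_add {f g : ℕ → ℂ} (hf : GeomSum f) (hg : GeomSum g) :
    GeomSum (fun n => f n + g n) := by
  obtain ⟨L1, h1⟩ := hf; obtain ⟨L2, h2⟩ := hg
  exact ⟨L1 ++ L2, fun n => by simp [h1 n, h2 n]⟩

lemma geomSum_neg {f : ℕ → ℂ} (hf : GeomSum f) : GeomSum (fun n => -f n) := by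
  obtain ⟨L, h⟩ := hf
  refine ⟨L.map fun t => ((-1) * t.1, 1 * t.2), fun n => ?_⟩
  show -f n = _
  rw [h n, gval_smul]; ring

lemma geomSum_mul {f g : ℕ → ℂ} (hf : GeomSum f) (hg : GeomSum g) :
    GeomSum (fun n => f n * g n) := by
  obtain ⟨L1, h1⟩ := hf; obtain ⟨L2, h2⟩ := hg
  refine ⟨L1.flatMap fun t => L2.map fun u => (t.1 * u.1, t.2 * u.2), fun n => ?_⟩
  show f n * g n = _
  rw [h1 n, h2 n]; clear h1 h2
  induction L1 with
  | nil => simp [gval]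
  | cons t L ih =>
    rw [List.flatMap_cons]
    simp only [gval_cons, gval_append, add_mul, ih, gval_smul]

lemma geomSum_shift {f : ℕ → ℂ} (m : ℕ) (hf : GeomSum f) :
    GeomSum (fun n => f (n + m)) := by
  obtain ⟨L, h⟩ := hf
  refine ⟨L.map fun t => (t.1 * t.2 ^ m, t.2), fun n => ?_⟩
  show f (n + m) = _
  rw [h (n + m)]; clear h
  induction L with
  | nil => simp
  | cons t L ih =>
    simp only [List.map_cons, gval_cons, ih]
    congr 1
    rw [pow_add]; ring

lemma geomSum_sub {f g : ℕ → ℂ} (hf : GeomSum f) (hg : GeomSum g) :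
    GeomSum (fun n => f n - g n) := by
  have := geomSum_add hf (geomSum_neg hg); simpa [sub_eq_add_neg] using this

lemma monic_prod_XsubC (L : List (ℂ × ℂ)) : ((L.map fun t => X - C t.2).prod : ℂ[X]).Monic := by
  induction L with
  | nil => simp [Polynomial.monic_one]
  | cons t L ih => simpa using (monic_X_sub_C t.2).mul ih

lemma natDegree_prod_XsubC (L : List (ℂ × ℂ)) :
    ((L.map fun t => X - C t.2).prod : ℂ[X]).natDegree = L.length := by
  induction L with
  | nil => simp
  | cons t L ih =>
    simp only [List.map_cons, List.prod_cons, List.length_cons]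
    rw [Polynomial.natDegree_mul (X_sub_C_ne_zero t.2) (monic_prod_XsubC L).ne_zero, ih,
      natDegree_X_sub_C]
    omega

lemma list_sum_finset_sum {β : Type*} (L : List β) (s : Finset ℕ) (F : β → ℕ → ℂ) :
    (L.map fun t => ∑ i ∈ s, F t i).sum = ∑ i ∈ s, (L.map fun t => F t i).sum := by
  induction L with
  | nil => simp
  | cons t L ih => simp [ih, Finset.sum_add_distrib]

lemma geomSum_isCFinite {f : ℕ → ℂ} (hf : GeomSum f) : IsCFinite f := by
  obtain ⟨L, h⟩ := hf
  set p : ℂ[X] := (L.map fun t => X - C t.2).prod with hp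
  have hmonic : p.Monic := monic_prod_XsubC L
  have hdeg : p.natDegree = L.length := natDegree_prod_XsubC L
  have hroot : ∀ t ∈ L, p.eval t.2 = 0 := by
    intro t ht
    rw [hp, Polynomial.eval_list_prod]
    apply List.prod_eq_zero
    simp only [List.map_map]
    exact List.mem_map.2 ⟨t, ht, by simp⟩
  refine ⟨L.length, fun i => -(p.coeff i), fun n _ => ?_⟩
  have key : ∑ i ∈ Finset.range (L.length + 1), p.coeff i * f (n + i) = 0 := by
    calc ∑ i ∈ Finset.range (L.length + 1), p.coeff i * f (n + i)
        = (L.map fun t => ∑ i ∈ Finset.range (L.length + 1),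
            p.coeff i * (t.1 * t.2 ^ (n + i))).sum := by
          rw [list_sum_finset_sum]
          refine Finset.sum_congr rfl fun i _ => ?_
          rw [h (n + i)]
          rw [gval, ← List.sum_map_mul_left]
      _ = (L.map fun t => t.1 * t.2 ^ n * p.eval t.2).sum := by
          refine congrArg _ (List.map_congr_left fun t ht => ?_)
          rw [eval_eq_sum_range, hdeg, Finset.mul_sum]
          refine Finset.sum_congr rfl fun i _ => ?_
          rw [pow_add]; ring
      _ = 0 := by
          refine List.sum_eq_zero fun x hx => ?_
          obtain ⟨t, ht, rfl⟩ := List.mem_map.1 hx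
          rw [hroot t ht, mul_zero]
  rw [Finset.sum_range_succ] at key
  have hc : p.coeff L.length = 1 := by
    have := hmonic.coeff_natDegree; rwa [hdeg] at this
  rw [hc, one_mul] at key
  rw [Fin.sum_univ_eq_sum_range (fun i => -(p.coeff i) * f (n + i))]
  rw [eq_neg_of_add_eq_zero_right key]
  rw [← Finset.sum_neg_distrib]
  exact Finset.sum_congr rfl fun i _ => by ring

/-- apply the operator `σ - μ` -/
def app (μ : ℕ → ℂ) (f : ℕ → ℂ) : ℕ → ℂ := fun n => f (n + 1) - μ n * f n

def apps (μs : List (ℕ → ℂ)) (f : ℕ → ℂ) : ℕ → ℂ := μs.foldl (fun h μ => app μ h) f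

@[simp] lemma apps_nil (f : ℕ → ℂ) : apps [] f = f := rfl

@[simp] lemma apps_cons (μ : ℕ → ℂ) (μs : List (ℕ → ℂ)) (f : ℕ → ℂ) :
    apps (μ :: μs) f = apps μs (app μ f) := rfl

lemma apps_append (μs₁ μs₂ : List (ℕ → ℂ)) (f : ℕ → ℂ) :
    apps (μs₁ ++ μs₂) f = apps μs₂ (apps μs₁ f) := by
  simp [apps, List.foldl_append]

lemma apps_congr (μs : List (ℕ → ℂ)) {f g : ℕ → ℂ} {N : ℕ}
    (h : ∀ n, N ≤ n → f n = g n) : ∀ n, N ≤ n → apps μs f n = apps μs g n := by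
  induction μs generalizing f g with
  | nil => simpa using h
  | cons μ μs ih =>
    simp only [apps_cons]
    refine ih fun n hn => ?_
    simp only [app, h n hn, h (n + 1) (by omega)]

lemma apps_add (μs : List (ℕ → ℂ)) (f g : ℕ → ℂ) (n : ℕ) :
    apps μs (fun m => f m + g m) n = apps μs f n + apps μs g n := by
  induction μs generalizing f g with
  | nil => simp
  | cons μ μs ih =>
    simp only [apps_cons]
    have : app μ (fun m => f m + g m) = fun m => app μ f m + app μ g m := by
      funext m; simp [app]; ring
    rw [this, ih]

/-- eventually satisfies a monic linear recurrence with GeomSum coefficients -/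
def Nice (f : ℕ → ℂ) : Prop :=
  ∃ S N : ℕ, ∃ l : ℕ → ℕ → ℂ, (∀ i, GeomSum (l i)) ∧
    ∀ n, N ≤ n → f (n + S) = ∑ i ∈ Finset.range S, l i n * f (n + i)

lemma nice_of_evZero {f : ℕ → ℂ} {N : ℕ} (h : ∀ n, N ≤ n → f n = 0) : Nice f := by
  refine ⟨1, N, fun _ => fun _ => 0, fun i => geomSum_zero, fun n hn => ?_⟩
  rw [h (n + 1) (by omega)]; simp

lemma nice_peel {μ f : ℕ → ℂ} (hμ : GeomSum μ) (h : Nice (app μ f)) : Nice f := by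
  obtain ⟨S, N, l, hl, hrec⟩ := h
  refine ⟨S + 1, N, fun i n =>
    (if i = S then μ (n + S) else 0) + ((if i < S then -(l i n * μ (n + i)) else 0) +
      (if i = 0 then 0 else l (i - 1) n)), fun i => ?_, fun n hn => ?_⟩
  · refine geomSum_add ?_ (geomSum_add ?_ ?_)
    · split <;> [exact geomSum_shift S hμ; exact geomSum_zero]
    · split
      · exact geomSum_neg (geomSum_mul (hl i) (geomSum_shift i hμ))
      · exact geomSum_zero
    · split <;> [exact geomSum_zero; exact hl (i - 1)]
  · have key := hrec n hn
    simp only [app] at key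
    -- f (n + S + 1) = μ (n+S) * f (n+S) + ∑ l i n * (f (n+i+1) - μ (n+i) * f (n+i))
    simp only [← Nat.add_assoc]
    have expand : f (n + S + 1) =
        μ (n + S) * f (n + S) + ∑ i ∈ Finset.range S, l i n * (f (n + i + 1) - μ (n + i) * f (n + i)) := by
      linear_combination key
    rw [expand]
    rw [Finset.sum_congr rfl (fun i _ => add_mul _ _ (f (n+i))),
      Finset.sum_add_distrib,
      Finset.sum_congr rfl (fun i _ => add_mul _ _ (f (n+i))),
      Finset.sum_add_distrib]
    have hA : ∑ i ∈ Finset.range (S+1), (if i = S then μ (n + S) else 0) * f (n + i)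
        = μ (n + S) * f (n + S) := by
      simp only [ite_mul, zero_mul, Finset.sum_ite_eq', Finset.mem_range]
      simp
    have hB : ∑ i ∈ Finset.range (S+1), (if i < S then -(l i n * μ (n + i)) else 0) * f (n + i)
        = -∑ i ∈ Finset.range S, l i n * μ (n + i) * f (n + i) := by
      rw [Finset.sum_range_succ, if_neg (lt_irrefl S), zero_mul, add_zero,
        ← Finset.sum_neg_distrib]
      refine Finset.sum_congr rfl fun i hi => ?_
      rw [if_pos (Finset.mem_range.1 hi)]
      ring
    have hC : ∑ i ∈ Finset.range (S+1), (if i = 0 then 0 else l (i - 1) n) * f (n + i)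
        = ∑ i ∈ Finset.range S, l i n * f (n + i + 1) := by
      rw [Finset.sum_range_succ']
      simp only [Nat.succ_ne_zero, if_false, reduceIte, Nat.add_sub_cancel, zero_mul, add_zero]
      exact Finset.sum_congr rfl fun i hi => rfl
    rw [hA, hB, hC]
    have : ∑ i ∈ Finset.range S, l i n * (f (n + i + 1) - μ (n + i) * f (n + i))
        = (∑ i ∈ Finset.range S, l i n * f (n + i + 1))
          - ∑ i ∈ Finset.range S, l i n * μ (n + i) * f (n + i) := by
      rw [← Finset.sum_sub_distrib]
      exact Finset.sum_congr rfl fun i _ => by ring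
    rw [this]
    ring

def Killable (f : ℕ → ℂ) : Prop :=
  ∃ μs : List (ℕ → ℂ), (∀ μ ∈ μs, GeomSum μ) ∧ ∃ N, ∀ n, N ≤ n → apps μs f n = 0

lemma killable_nice {f : ℕ → ℂ} (h : Killable f) : Nice f := by
  obtain ⟨μs, hμ, N, hz⟩ := h
  induction μs generalizing f with
  | nil => exact nice_of_evZero (by simpa using hz)
  | cons μ μs ih =>
    refine nice_peel (hμ μ (by simp)) ?_
    exact ih (fun ν hν => hμ ν (by simp [hν])) (by simpa using hz)

lemma killable_congr {f g : ℕ → ℂ} {N : ℕ} (h : ∀ n, N ≤ n → f n = g n)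
    (hg : Killable g) : Killable f := by
  obtain ⟨μs, hμ, M, hz⟩ := hg
  exact ⟨μs, hμ, max N M, fun n hn =>
    (apps_congr μs h n (le_trans (le_max_left _ _) hn)).trans (hz n (le_trans (le_max_right _ _) hn))⟩

lemma sum_range_add' (F : ℕ → ℂ) (N S : ℕ) :
    ∑ i ∈ Finset.range (N + S), F i = (∑ i ∈ Finset.range N, F i) + ∑ k ∈ Finset.range S, F (N + k) := by
  induction S with
  | zero => simp
  | succ S ih => rw [← Nat.add_assoc, Finset.sum_range_succ, ih, Finset.sum_range_succ]; ring

lemma nice_isC2Finite {f : ℕ → ℂ} (h : Nice f) : IsC2Finite f := by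
  obtain ⟨S, N, l, hl, hrec⟩ := h
  refine ⟨N + S, fun j => if (j : ℕ) < N + S then
      (if N ≤ (j : ℕ) then (fun n => l ((j : ℕ) - N) (n + N)) else (fun _ => 0))
    else (fun _ => 1), fun i => ?_, fun n => ?_, fun n hn => ?_⟩
  · dsimp only
    split
    · split
      · exact geomSum_isCFinite (geomSum_shift N (hl _))
      · exact geomSum_isCFinite geomSum_zero
    · exact geomSum_isCFinite (geomSum_const 1)
  · dsimp only [Fin.val_last]
    rw [if_neg (lt_irrefl _)]
    exact one_ne_zero
  · dsimp only [Fin.val_last]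
    rw [if_neg (lt_irrefl _), one_mul]
    have hcast : ∀ i : Fin (N + S), ((i.castSucc : Fin (N + S + 1)) : ℕ) = (i : ℕ) := fun i => rfl
    have : ∑ i : Fin (N + S), (if ((i.castSucc : Fin (N+S+1)) : ℕ) < N + S then
        (if N ≤ ((i.castSucc : Fin (N+S+1)) : ℕ) then (fun n => l (((i.castSucc : Fin (N+S+1)) : ℕ) - N) (n + N)) else (fun _ => 0))
      else (fun _ => 1)) n * f (n + i)
        = ∑ i ∈ Finset.range (N + S), (if N ≤ i then l (i - N) (n + N) else 0) * f (n + i) := by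
      rw [← Fin.sum_univ_eq_sum_range (fun i => (if N ≤ i then l (i - N) (n + N) else 0) * f (n + i))]
      refine Finset.sum_congr rfl fun i _ => ?_
      rw [hcast, if_pos i.isLt]
      split <;> rfl
    rw [this, sum_range_add']
    have h0 : ∑ i ∈ Finset.range N, (if N ≤ i then l (i - N) (n + N) else 0) * f (n + i) = 0 := by
      refine Finset.sum_eq_zero fun i hi => ?_
      have hiN := Finset.mem_range.1 hi
      rw [if_neg (by omega), zero_mul]
    rw [h0, zero_add]
    have h1 : ∑ k ∈ Finset.range S, (if N ≤ N + k then l (N + k - N) (n + N) else 0) * f (n + (N + k))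
        = ∑ k ∈ Finset.range S, l k (n + N) * f ((n + N) + k) := by
      refine Finset.sum_congr rfl fun k _ => ?_
      rw [if_pos (by omega), Nat.add_sub_cancel_left]
      congr 2
      omega
    rw [h1, ← hrec (n + N) (by omega)]
    congr 1
    omega

-- ===================== section 4 =====================

def epval (W : List (ℂ[X] × ℂ)) (n : ℕ) : ℂ :=
  (W.map fun t => t.1.eval (n : ℂ) * t.2 ^ n).sum

@[simp] lemma epval_nil (n : ℕ) : epval [] n = 0 := rfl

@[simp] lemma epval_cons (t : ℂ[X] × ℂ) (W : List (ℂ[X] × ℂ)) (n : ℕ) :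
    epval (t :: W) n = t.1.eval (n : ℂ) * t.2 ^ n + epval W n := by simp [epval]

@[simp] lemma epval_append (W1 W2 : List (ℂ[X] × ℂ)) (n : ℕ) :
    epval (W1 ++ W2) n = epval W1 n + epval W2 n := by simp [epval]

def meas (W : List (ℂ[X] × ℂ)) : ℕ := (W.map fun t => t.1.natDegree + 1).sum

@[simp] lemma meas_nil : meas [] = 0 := rfl
@[simp] lemma meas_cons (t : ℂ[X] × ℂ) (W : List (ℂ[X] × ℂ)) :
    meas (t :: W) = t.1.natDegree + 1 + meas W := by simp [meas]

lemma natDegree_X_add_one : ((X + 1 : ℂ[X])).natDegree = 1 := by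
  rw [show (X + 1 : ℂ[X]) = X + C 1 by rw [map_one]]
  exact natDegree_X_add_C 1

lemma natDegree_comp_X_add_one (P : ℂ[X]) : (P.comp (X + 1)).natDegree = P.natDegree := by
  rw [natDegree_comp, natDegree_X_add_one, mul_one]

lemma coeff_comp_X_add_one_top (P : ℂ[X]) :
    (P.comp (X + 1)).coeff P.natDegree = P.coeff P.natDegree := by
  have h1 : (P.comp (X + 1)).natDegree = P.natDegree := natDegree_comp_X_add_one P
  have h2 : (P.comp (X + 1)).leadingCoeff = P.leadingCoeff := by
    rw [leadingCoeff_comp (by rw [natDegree_X_add_one]; omega)]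
    have : (X + 1 : ℂ[X]).leadingCoeff = 1 := by
      rw [show (X + 1 : ℂ[X]) = X + C 1 by rw [map_one]]
      exact (monic_X_add_C 1).leadingCoeff
    rw [this, one_pow, mul_one]
  calc (P.comp (X + 1)).coeff P.natDegree
      = (P.comp (X + 1)).leadingCoeff := by rw [leadingCoeff, h1]
    _ = P.leadingCoeff := h2
    _ = P.coeff P.natDegree := rfl

lemma natDegree_le_of_coeff_top {R : ℂ[X]} {m : ℕ} (h1 : R.natDegree ≤ m + 1)
    (h2 : R.coeff (m + 1) = 0) : R.natDegree ≤ m := by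
  by_cases hR : R = 0
  · simp [hR]
  · have : R.natDegree ≠ m + 1 := fun he => hR (leadingCoeff_eq_zero.1 (by rw [leadingCoeff, he]; exact h2))
    omega

lemma degree_drop {P : ℂ[X]} {m : ℕ} (h : P.natDegree = m + 1) :
    (P.comp (X + 1) - P).natDegree ≤ m := by
  refine natDegree_le_of_coeff_top ?_ ?_
  · refine le_trans (natDegree_sub_le _ _) ?_
    rw [natDegree_comp_X_add_one, h]
    omega
  · rw [coeff_sub, ← h, coeff_comp_X_add_one_top, sub_self]

def killMap (A r γ0 : ℂ) (W : List (ℂ[X] × ℂ)) : List (ℂ[X] × ℂ) :=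
  W.map fun t => (C A * (C t.2 * t.1.comp (X + 1) - C γ0 * t.1), t.2 * r)

lemma killTerm_deg (A γ0 γ' : ℂ) (P' : ℂ[X]) :
    (C A * (C γ' * P'.comp (X + 1) - C γ0 * P')).natDegree ≤ P'.natDegree := by
  refine le_trans (natDegree_C_mul_le _ _) (le_trans (natDegree_sub_le _ _) (max_le ?_ ?_))
  · exact le_trans (natDegree_C_mul_le _ _) (le_of_eq (natDegree_comp_X_add_one P'))
  · exact natDegree_C_mul_le _ _

lemma meas_killMap_le (A r γ0 : ℂ) (W : List (ℂ[X] × ℂ)) :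
    meas (killMap A r γ0 W) ≤ meas W := by
  induction W with
  | nil => simp [killMap]
  | cons t W ih =>
    simp only [killMap, List.map_cons, meas_cons] at *
    have := killTerm_deg A γ0 t.2 t.1
    omega

lemma epval_killMap (A r γ0 : ℂ) (W : List (ℂ[X] × ℂ)) (n : ℕ) :
    epval (killMap A r γ0 W) n
      = epval W (n + 1) * (A * r ^ n) - (γ0 * A * r ^ n) * epval W n := by
  induction W with
  | nil => simp [killMap]
  | cons t W ih =>
    simp only [killMap, List.map_cons, epval_cons] at *
    rw [ih]
    have hev : ((C A * (C t.2 * t.1.comp (X + 1) - C γ0 * t.1)).eval ((n : ℂ)))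
        = A * (t.2 * t.1.eval ((n : ℂ) + 1) - γ0 * t.1.eval (n : ℂ)) := by
      simp [eval_comp]
    rw [hev]
    have : ((n : ℕ) + 1 : ℂ) = (n : ℂ) + 1 := by push_cast; ring
    rw [show ((n + 1 : ℕ) : ℂ) = (n : ℂ) + 1 by push_cast; ring]
    rw [mul_pow]
    ring

-- transform of a block's EP under a general GeomSum operator factor
def tMap (A r : ℂ) (Lμ : List (ℂ × ℂ)) (W : List (ℂ[X] × ℂ)) : List (ℂ[X] × ℂ) :=
  (W.map fun t => (C A * (C t.2 * t.1.comp (X + 1)), t.2 * r))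
    ++ Lμ.flatMap fun u => W.map fun t => (C (-u.1) * t.1, t.2 * u.2)

lemma epval_scaleMap (a ρ : ℂ) (W : List (ℂ[X] × ℂ)) (n : ℕ) :
    epval (W.map fun t => (C a * t.1, t.2 * ρ)) n = a * ρ ^ n * epval W n := by
  induction W with
  | nil => simp
  | cons t W ih =>
    simp only [List.map_cons, epval_cons, ih, eval_mul, eval_C, mul_pow]
    ring

lemma epval_tMap (A r : ℂ) (Lμ : List (ℂ × ℂ)) (W : List (ℂ[X] × ℂ)) (n : ℕ) :
    epval (tMap A r Lμ W) n = epval W (n + 1) * (A * r ^ n) - gval Lμ n * epval W n := by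
  rw [tMap, epval_append]
  have h1 : epval (W.map fun t => (C A * (C t.2 * t.1.comp (X + 1)), t.2 * r)) n
      = epval W (n + 1) * (A * r ^ n) := by
    induction W with
    | nil => simp
    | cons t W ih =>
      simp only [List.map_cons, epval_cons, ih, eval_mul, eval_C, eval_comp, eval_add, eval_X,
        eval_one, mul_pow]
      rw [show ((n + 1 : ℕ) : ℂ) = (n : ℂ) + 1 by push_cast; ring]
      ring
  have h2 : epval (Lμ.flatMap fun u => W.map fun t => (C (-u.1) * t.1, t.2 * u.2)) n
      = -(gval Lμ n * epval W n) := by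
    induction Lμ with
    | nil => simp [gval]
    | cons u Lμ ih =>
      rw [List.flatMap_cons, epval_append, ih, epval_scaleMap]
      simp only [gval]
      simp
      ring
  rw [h1, h2]
  ring

lemma killBlock : ∀ (k : ℕ) (W : List (ℂ[X] × ℂ)), meas W ≤ k →
    ∀ (g : ℕ → ℂ) (A r : ℂ) (N : ℕ), (∀ n, N ≤ n → g (n + 1) = A * r ^ n * g n) →
    ∃ μs, (∀ μ ∈ μs, GeomSum μ) ∧
      ∃ N', ∀ n, N' ≤ n → apps μs (fun m => epval W m * g m) n = 0 := by
  intro k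
  induction k with
  | zero =>
    intro W hW g A r N hg
    match W with
    | [] => exact ⟨[], by simp, 0, fun n _ => by simp⟩
    | t :: V => simp at hW
  | succ k ih =>
    intro W hW g A r N hg
    match W with
    | [] => exact ⟨[], by simp, 0, fun n _ => by simp⟩
    | (P, γ) :: V =>
      set μ : ℕ → ℂ := fun n => γ * A * r ^ n with hμdef
      have hμgs : GeomSum μ := geomSum_geo _ _
      set W₁ := killMap A r γ ((P, γ) :: V) with hW₁
      have happ : ∀ n, N ≤ n →
          app μ (fun m => epval ((P, γ) :: V) m * g m) n = epval W₁ n * g n := by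
        intro n hn
        simp only [app]
        rw [hg n hn, hW₁, epval_killMap]
        ring
      -- find W₂ with smaller measure and same epval
      have key : ∃ W₂, meas W₂ ≤ k ∧ ∀ n, epval W₁ n = epval W₂ n := by
        rcases Nat.eq_zero_or_pos P.natDegree with h0 | hpos
        · refine ⟨killMap A r γ V, ?_, ?_⟩
          · have := meas_killMap_le A r γ V
            simp only [meas_cons, h0] at hW
            omega
          · intro n
            rw [hW₁]
            have : killMap A r γ ((P, γ) :: V) =
              (C A * (C γ * P.comp (X + 1) - C γ * P), γ * r) :: killMap A r γ V := rfl
            rw [this, epval_cons]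
            obtain ⟨c0, rfl⟩ : ∃ c0, P = C c0 := ⟨P.coeff 0, eq_C_of_natDegree_le_zero (le_of_eq h0)⟩
            simp
        · obtain ⟨m, hm⟩ : ∃ m, P.natDegree = m + 1 := ⟨P.natDegree - 1, by omega⟩
          refine ⟨W₁, ?_, fun n => rfl⟩
          have hhead : (C A * (C γ * P.comp (X + 1) - C γ * P)).natDegree ≤ m := by
            have heq : C A * (C γ * P.comp (X + 1) - C γ * P)
                = C (A * γ) * (P.comp (X + 1) - P) := by
              rw [C_mul]; ring
            rw [heq]
            exact le_trans (natDegree_C_mul_le _ _) (degree_drop hm)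
          have htail := meas_killMap_le A r γ V
          have : killMap A r γ ((P, γ) :: V) =
              (C A * (C γ * P.comp (X + 1) - C γ * P), γ * r) :: killMap A r γ V := rfl
          rw [hW₁, this]
          simp only [meas_cons, hm] at hW ⊢
          omega
      obtain ⟨W₂, hW₂meas, hW₂val⟩ := key
      obtain ⟨μs', hμs', N'', hz⟩ := ih W₂ hW₂meas g A r N hg
      refine ⟨μ :: μs', ?_, max N N'', fun n hn => ?_⟩
      · intro ν hν
        rcases List.mem_cons.1 hν with rfl | h
        · exact hμgs
        · exact hμs' ν h
      · rw [apps_cons]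
        have e1 : ∀ n, N ≤ n → app μ (fun m => epval ((P, γ) :: V) m * g m) n
            = (fun m => epval W₂ m * g m) n := by
          intro n hn
          rw [happ n hn, hW₂val n]
        calc apps μs' (app μ fun m => epval ((P, γ) :: V) m * g m) n
            = apps μs' (fun m => epval W₂ m * g m) n :=
              apps_congr μs' e1 n (le_trans (le_max_left _ _) hn)
          _ = 0 := hz n (le_trans (le_max_right _ _) hn)

structure Blk where
  W : List (ℂ[X] × ℂ)
  g : ℕ → ℂ
  A : ℂ
  r : ℂ

def BlkOK (N : ℕ) (B : Blk) : Prop := ∀ n, N ≤ n → B.g (n + 1) = B.A * B.r ^ n * B.g n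

def bval : List Blk → ℕ → ℂ
  | [], _ => 0
  | B :: Bs, n => epval B.W n * B.g n + bval Bs n

lemma apps_zero (μs : List (ℕ → ℂ)) (n : ℕ) : apps μs (fun _ => 0) n = 0 := by
  induction μs generalizing n with
  | nil => simp
  | cons μ μs ih =>
    rw [apps_cons]
    have : app μ (fun _ => (0 : ℂ)) = fun _ => (0 : ℂ) := by funext m; simp [app]
    rw [this]; exact ih n

lemma apps_block {N : ℕ} (B : Blk) (hB : BlkOK N B) :
    ∀ (μs : List (ℕ → ℂ)), (∀ μ ∈ μs, GeomSum μ) → ∀ (V : List (ℂ[X] × ℂ)),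
    ∃ V', ∀ n, N ≤ n → apps μs (fun m => epval V m * B.g m) n = epval V' n * B.g n := by
  intro μs
  induction μs with
  | nil => exact fun _ V => ⟨V, fun n _ => by simp⟩
  | cons μ μs ih =>
    intro hμs V
    obtain ⟨Lμ, hLμ⟩ := hμs μ (by simp)
    have hstep : ∀ n, N ≤ n → app μ (fun m => epval V m * B.g m) n
        = epval (tMap B.A B.r Lμ V) n * B.g n := by
      intro n hn
      simp only [app]
      rw [hB n hn, epval_tMap, hLμ n]
      ring
    obtain ⟨V', hV'⟩ := ih (fun ν hν => hμs ν (by simp [hν])) (tMap B.A B.r Lμ V)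
    refine ⟨V', fun n hn => ?_⟩
    rw [apps_cons]
    calc apps μs (app μ fun m => epval V m * B.g m) n
        = apps μs (fun m => epval (tMap B.A B.r Lμ V) m * B.g m) n :=
          apps_congr μs hstep n hn
      _ = epval V' n * B.g n := hV' n hn

lemma apps_bval {N : ℕ} (μs : List (ℕ → ℂ)) (hμs : ∀ μ ∈ μs, GeomSum μ) :
    ∀ (Bs : List Blk), (∀ B ∈ Bs, BlkOK N B) →
    ∃ Bs', Bs'.length = Bs.length ∧ (∀ B ∈ Bs', BlkOK N B) ∧
      ∀ n, N ≤ n → apps μs (bval Bs) n = bval Bs' n := by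
  intro Bs
  induction Bs with
  | nil => exact fun _ => ⟨[], rfl, by simp, fun n _ => by simpa [bval] using apps_zero μs n⟩
  | cons B Bs ih =>
    intro hOK
    obtain ⟨V', hV'⟩ := apps_block B (hOK B (by simp)) μs hμs B.W
    obtain ⟨Bs', hlen, hBs'OK, hBs'⟩ := ih (fun B' h => hOK B' (by simp [h]))
    refine ⟨⟨V', B.g, B.A, B.r⟩ :: Bs', by simp [hlen], ?_, fun n hn => ?_⟩
    · intro B' hB'
      rcases List.mem_cons.1 hB' with rfl | h
      · exact hOK B (by simp)
      · exact hBs'OK B' h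
    · have : bval (B :: Bs) = fun m => epval B.W m * B.g m + bval Bs m := rfl
      rw [this, apps_add, hV' n hn, hBs' n hn]
      rfl

lemma killBlocks (N : ℕ) : ∀ (L : ℕ) (Bs : List Blk), Bs.length ≤ L →
    (∀ B ∈ Bs, BlkOK N B) → Killable (bval Bs) := by
  intro L
  induction L with
  | zero =>
    intro Bs hL _
    have : Bs = [] := List.length_eq_zero_iff.1 (by omega)
    subst this
    exact ⟨[], by simp, 0, fun n _ => by simp [bval]⟩
  | succ L ih =>
    intro Bs hL hOK
    match Bs with
    | [] => exact ⟨[], by simp, 0, fun n _ => by simp [bval]⟩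
    | B :: Bs =>
      obtain ⟨μs₀, hμs₀, N₀, hz₀⟩ := killBlock (meas B.W) B.W le_rfl B.g B.A B.r N (hOK B (by simp))
      obtain ⟨Bs', hlen, hBs'OK, hBs'⟩ := apps_bval μs₀ hμs₀ Bs (fun B' h => hOK B' (by simp [h]))
      have hL' : Bs'.length ≤ L := by simp at hL; omega
      obtain ⟨μs₁, hμs₁, N₁, hz₁⟩ := ih Bs' hL' hBs'OK
      refine ⟨μs₀ ++ μs₁, ?_, max (max N N₀) N₁, fun n hn => ?_⟩
      · intro ν hν
        rcases List.mem_append.1 hν with h | h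
        · exact hμs₀ ν h
        · exact hμs₁ ν h
      · rw [apps_append]
        have e1 : ∀ m, max N N₀ ≤ m → apps μs₀ (bval (B :: Bs)) m = bval Bs' m := by
          intro m hm
          have : bval (B :: Bs) = fun x => epval B.W x * B.g x + bval Bs x := rfl
          rw [this, apps_add, hz₀ m (le_trans (le_max_right _ _) hm),
            hBs' m (le_trans (le_max_left _ _) hm), zero_add]
        calc apps μs₁ (apps μs₀ (bval (B :: Bs))) n
            = apps μs₁ (bval Bs') n := apps_congr μs₁ e1 n (le_trans (le_max_left _ _) hn)
          _ = 0 := hz₁ n (le_trans (le_max_right _ _) hn)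

lemma monic_X_add_one : (X + 1 : ℂ[X]).Monic := by
  rw [show (X + 1 : ℂ[X]) = X + C 1 by rw [map_one]]
  exact monic_X_add_C 1

lemma natDegree_X_add_one_pow (j : ℕ) : ((X + 1 : ℂ[X]) ^ j).natDegree = j := by
  rw [monic_X_add_one.natDegree_pow]
  rw [show (X + 1 : ℂ[X]) = X + C 1 by rw [map_one], natDegree_X_add_C, mul_one]

-- ===== Stage A =====

lemma solve_poly (γ α : ℂ) (hγ : γ ≠ 0) :
    ∀ (k : ℕ) (P : ℂ[X]), P.natDegree ≤ k →
    ∃ Q : ℂ[X], C γ * Q.comp (X + 1) - C α * Q = P := by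
  intro k
  induction k with
  | zero =>
    intro P hP
    by_cases hP0 : P = 0
    · exact ⟨0, by simp [hP0]⟩
    · obtain ⟨p0, rfl⟩ : ∃ p0, P = C p0 := ⟨P.coeff 0, eq_C_of_natDegree_le_zero hP⟩
      by_cases hγα : γ - α = 0
      · refine ⟨C (p0 / γ) * X, ?_⟩
        have h1 : (C (p0 / γ) * X).comp (X + 1) = C (p0 / γ) * (X + 1) := by
          simp [mul_comp]
        rw [h1]
        have hαγ : α = γ := by linear_combination -hγα
        rw [hαγ]
        have h2 : C γ * (C (p0 / γ) * (X + 1)) - C γ * (C (p0 / γ) * X)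
            = C γ * C (p0 / γ) := by ring
        rw [h2, ← C_mul, mul_div_cancel₀ _ hγ]
      · refine ⟨C (p0 / (γ - α)), ?_⟩
        rw [C_comp, ← C_mul, ← C_mul, ← C_sub, ← sub_mul]
        rw [mul_comm, div_mul_cancel₀ _ hγα]
  | succ k ih =>
    intro P hP
    by_cases hPk : P.natDegree ≤ k
    · exact ih P hPk
    · have hm : P.natDegree = k + 1 := by omega
      by_cases hγα : γ - α = 0
      · -- γ = α
        have hαγ : α = γ := by linear_combination -hγα
        rw [hαγ]
        set m := k + 1 with hmk
        set cc := P.coeff m / (γ * (m + 1 : ℂ)) with hcc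
        set Q₀ : ℂ[X] := C cc * X ^ (m + 1) with hQ₀
        have hTQ : C γ * Q₀.comp (X + 1) - C γ * Q₀
            = C (cc * γ) * ((X + 1) ^ (m + 1) - X ^ (m + 1)) := by
          rw [hQ₀]
          simp only [mul_comp, C_comp, X_pow_comp]
          rw [C_mul]; ring
        have hdenne : γ * ((m : ℂ) + 1) ≠ 0 :=
          mul_ne_zero hγ (Nat.cast_add_one_ne_zero m)
        have hcoefftop : (C γ * Q₀.comp (X + 1) - C γ * Q₀).coeff m = P.coeff m := by
          rw [hTQ, coeff_C_mul, coeff_sub, coeff_X_add_one_pow, coeff_X_pow,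
            if_neg (by omega), Nat.choose_succ_self_right]
          rw [hcc]
          rw [div_mul_eq_mul_div, div_mul_eq_mul_div, div_eq_iff hdenne]
          push_cast
          ring
        have hdegtop : (C γ * Q₀.comp (X + 1) - C γ * Q₀).natDegree ≤ m := by
          rw [hTQ]
          refine le_trans (natDegree_C_mul_le _ _) (natDegree_le_of_coeff_top ?_ ?_)
          · refine le_trans (natDegree_sub_le _ _) ?_
            rw [natDegree_X_add_one_pow, natDegree_X_pow]
            omega
          · rw [coeff_sub, coeff_X_add_one_pow, coeff_X_pow, if_pos rfl, Nat.choose_self]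
            push_cast; ring
        set R := P - (C γ * Q₀.comp (X + 1) - C γ * Q₀) with hR
        have hRdeg : R.natDegree ≤ k := by
          refine natDegree_le_of_coeff_top ?_ ?_
          · exact le_trans (natDegree_sub_le _ _) (by rw [hm]; exact max_le le_rfl (by rw [← hmk]; exact hdegtop))
          · rw [hR, coeff_sub, hcoefftop]; ring
        obtain ⟨Q₁, hQ₁⟩ := ih R hRdeg
        refine ⟨Q₀ + Q₁, ?_⟩
        rw [add_comp]
        have hCα : (C α : ℂ[X]) = C γ := by rw [hαγ]
        linear_combination hQ₁ + Q₁ * hCα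
      · -- γ ≠ α
        set m := k + 1 with hmk
        set cc := P.coeff m / (γ - α) with hcc
        set Q₀ : ℂ[X] := C cc * X ^ m with hQ₀
        have hTQ : C γ * Q₀.comp (X + 1) - C α * Q₀
            = C cc * (C γ * (X + 1) ^ m - C α * X ^ m) := by
          rw [hQ₀]
          simp only [mul_comp, C_comp, X_pow_comp]
          ring
        have hcoefftop : (C γ * Q₀.comp (X + 1) - C α * Q₀).coeff m = P.coeff m := by
          rw [hTQ, coeff_C_mul, coeff_sub, coeff_C_mul, coeff_C_mul, coeff_X_add_one_pow,
            coeff_X_pow, if_pos rfl, Nat.choose_self]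
          rw [hcc]
          field_simp
          push_cast; ring
        have hdegtop : (C γ * Q₀.comp (X + 1) - C α * Q₀).natDegree ≤ m := by
          rw [hTQ]
          refine le_trans (natDegree_C_mul_le _ _) (le_trans (natDegree_sub_le _ _) (max_le ?_ ?_))
          · exact le_trans (natDegree_C_mul_le _ _) (le_of_eq (natDegree_X_add_one_pow m))
          · exact le_trans (natDegree_C_mul_le _ _) (le_of_eq (natDegree_X_pow m))
        set R := P - (C γ * Q₀.comp (X + 1) - C α * Q₀) with hR
        have hRdeg : R.natDegree ≤ k := by
          refine natDegree_le_of_coeff_top ?_ ?_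
          · exact le_trans (natDegree_sub_le _ _) (by rw [hm]; exact max_le le_rfl (by rw [← hmk]; exact hdegtop))
          · rw [hR, coeff_sub, hcoefftop]; ring
        obtain ⟨Q₁, hQ₁⟩ := ih R hRdeg
        refine ⟨Q₀ + Q₁, ?_⟩
        rw [add_comp]
        linear_combination hQ₁

/-- particular solution for a whole exp-poly list -/
lemma part_sol (α : ℂ) (W₁ : List (ℂ[X] × ℂ)) (hW₁ : ∀ t ∈ W₁, t.2 ≠ 0) :
    ∃ W₂ : List (ℂ[X] × ℂ), (∀ t ∈ W₂, t.2 ≠ 0) ∧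
      ∀ n : ℕ, epval W₂ (n + 1) - α * epval W₂ n = epval W₁ n := by
  induction W₁ with
  | nil => exact ⟨[], by simp, fun n => by simp⟩
  | cons t W₁ ih =>
    obtain ⟨W₂, hW₂, hval⟩ := ih (fun u hu => hW₁ u (by simp [hu]))
    have ht2 : t.2 ≠ 0 := hW₁ t (by simp)
    obtain ⟨Q, hQ⟩ := solve_poly t.2 α ht2 t.1.natDegree t.1 le_rfl
    refine ⟨(Q, t.2) :: W₂, ?_, fun n => ?_⟩
    · intro u hu
      rcases List.mem_cons.1 hu with rfl | h
      · exact ht2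
      · exact hW₂ u h
    · rw [epval_cons, epval_cons, epval_cons]
      have hptwise : Q.eval ((n + 1 : ℕ) : ℂ) * t.2 ^ (n + 1) - α * (Q.eval ((n : ℕ) : ℂ) * t.2 ^ n)
          = t.1.eval ((n : ℕ) : ℂ) * t.2 ^ n := by
        have := congrArg (fun p : ℂ[X] => p.eval ((n : ℕ) : ℂ)) hQ
        simp only [eval_sub, eval_mul, eval_C, eval_comp, eval_add, eval_X, eval_one] at this
        rw [show ((n + 1 : ℕ) : ℂ) = (n : ℂ) + 1 by push_cast; ring]
        rw [pow_succ]
        linear_combination t.2 ^ n * this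
      linear_combination hptwise + hval n

lemma geom_extend {G : ℕ → ℂ} {α : ℂ} {N : ℕ} (hα : α ≠ 0)
    (h : ∀ n, N ≤ n → G (n + 1) = α * G n) :
    ∀ n, N ≤ n → G n = (G N / α ^ N) * α ^ n := by
  intro n hn
  induction n, hn using Nat.le_induction with
  | base => field_simp
  | succ n hn ih => rw [h n hn, ih, pow_succ]; ring


lemma epval_shift_map (W : List (ℂ[X] × ℂ)) (hne : ∀ t ∈ W, t.2 ≠ 0) (m : ℕ) :
    epval (W.map fun t => (C t.2⁻¹ * t.1.comp (X - C 1), t.2)) (m + 1) = epval W m := by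
  induction W with
  | nil => simp
  | cons t W ih =>
    simp only [List.map_cons, epval_cons]
    rw [ih (fun u hu => hne u (List.mem_cons_of_mem _ hu))]
    congr 1
    have ht2 : t.2 ≠ 0 := hne t (by simp)
    rw [eval_mul, eval_C, eval_comp, eval_sub, eval_X, eval_C]
    rw [show ((m + 1 : ℕ) : ℂ) - 1 = (m : ℂ) by push_cast; ring]
    rw [pow_succ]
    field_simp

/-- Stage A: eventual exp-poly closed form for solutions of monic recurrences -/
lemma stageA : ∀ (s : ℕ) (p : ℂ[X]), p.Monic → p.natDegree = s →
    ∀ (a : ℕ → ℂ) (n₁ : ℕ),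
    (∀ m, n₁ ≤ m → ∑ i ∈ Finset.range (s + 1), p.coeff i * a (m + i) = 0) →
    ∃ (W : List (ℂ[X] × ℂ)) (N : ℕ), (∀ t ∈ W, t.2 ≠ 0) ∧ ∀ n, N ≤ n → a n = epval W n := by
  intro s
  induction s with
  | zero =>
    intro p hmonic hdeg a n₁ hrec
    have hp1 : p = 1 := hmonic.natDegree_eq_zero.1 hdeg
    refine ⟨[], n₁, by simp, fun n hn => ?_⟩
    have := hrec n hn
    simp [hp1] at this
    simpa using this
  | succ s ih =>
    intro p hmonic hdeg a n₁ hrec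
    have hdegpos : 0 < p.degree := by
      rw [degree_eq_natDegree hmonic.ne_zero, hdeg]
      exact_mod_cast Nat.succ_pos s
    obtain ⟨α, hroot⟩ := Complex.exists_root hdegpos
    obtain ⟨p₁, hp⟩ := dvd_iff_isRoot.2 hroot
    have hp₁monic : p₁.Monic := (monic_X_sub_C α).of_mul_monic_left (hp ▸ hmonic)
    have hp₁deg : p₁.natDegree = s := by
      have := natDegree_mul (X_sub_C_ne_zero α) hp₁monic.ne_zero
      rw [← hp, hdeg, natDegree_X_sub_C] at this
      omega
    set a₁ : ℕ → ℂ := fun m => a (m + 1) - α * a m with ha₁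
    have hco : ∀ i, p.coeff (i + 1) = p₁.coeff i - α * p₁.coeff (i + 1) := by
      intro i
      rw [hp, sub_mul, coeff_sub, coeff_X_mul, coeff_C_mul]
    have hc0 : p.coeff 0 = -(α * p₁.coeff 0) := by
      rw [hp, sub_mul, coeff_sub, coeff_C_mul, mul_coeff_zero, coeff_X_zero]
      ring
    have hlast : p₁.coeff (s + 1) = 0 := coeff_eq_zero_of_natDegree_lt (by omega)
    have hrec₁ : ∀ m, n₁ ≤ m → ∑ i ∈ Finset.range (s + 1), p₁.coeff i * a₁ (m + i) = 0 := by
      intro m hm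
      have hkey := hrec m hm
      have e0 : ∑ i ∈ Finset.range (s + 1), p₁.coeff i * a₁ (m + i)
          = (∑ i ∈ Finset.range (s + 1), p₁.coeff i * a (m + i + 1))
            - α * ∑ i ∈ Finset.range (s + 1), p₁.coeff i * a (m + i) := by
        rw [Finset.mul_sum, ← Finset.sum_sub_distrib]
        refine Finset.sum_congr rfl fun i _ => ?_
        simp only [ha₁]
        ring
      have e1 : ∑ i ∈ Finset.range (s + 1 + 1), p.coeff i * a (m + i)
          = p.coeff 0 * a m + ∑ i ∈ Finset.range (s + 1), p.coeff (i + 1) * a (m + i + 1) := by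
        rw [Finset.sum_range_succ' (fun i => p.coeff i * a (m + i)) (s + 1)]
        exact add_comm _ _
      have e3 : ∑ i ∈ Finset.range (s + 1), p.coeff (i + 1) * a (m + i + 1)
          = (∑ i ∈ Finset.range (s + 1), p₁.coeff i * a (m + i + 1))
            - α * ∑ i ∈ Finset.range (s + 1), p₁.coeff (i + 1) * a (m + i + 1) := by
        rw [Finset.mul_sum, ← Finset.sum_sub_distrib]
        refine Finset.sum_congr rfl fun i _ => ?_
        rw [hco i]
        ring
      have e4 : ∑ i ∈ Finset.range (s + 1), p₁.coeff (i + 1) * a (m + i + 1)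
          = (∑ i ∈ Finset.range (s + 1), p₁.coeff i * a (m + i)) - p₁.coeff 0 * a m := by
        have h5 := Finset.sum_range_succ' (fun i => p₁.coeff i * a (m + i)) (s + 1)
        rw [Finset.sum_range_succ (fun i => p₁.coeff i * a (m + i)) (s + 1), hlast] at h5
        simp only [zero_mul, add_zero, ← Nat.add_assoc] at h5
        linear_combination -h5
      rw [e0]
      linear_combination hkey - e1 - e3 + α * e4 - a m * hc0
    obtain ⟨W₁, N₁, hW₁ne, hW₁⟩ := ih p₁ hp₁monic hp₁deg a₁ n₁ hrec₁
    by_cases hα : α = 0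
    · -- a (m+1) = a₁ m eventually
      subst hα
      refine ⟨W₁.map fun t => (C t.2⁻¹ * t.1.comp (X - C 1), t.2), N₁ + 1, ?_, ?_⟩
      · intro t ht
        obtain ⟨u, hu, rfl⟩ := List.mem_map.1 ht
        exact hW₁ne u hu
      · intro n hn
        obtain ⟨m, hmn, rfl⟩ : ∃ m, N₁ ≤ m ∧ n = m + 1 := ⟨n - 1, by omega, by omega⟩
        rw [epval_shift_map W₁ hW₁ne m]
        have hstep : a (m + 1) = a₁ m := by simp [ha₁]
        rw [hstep]
        exact hW₁ m hmn
    · -- α ≠ 0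
      obtain ⟨W₂, hW₂ne, hW₂⟩ := part_sol α W₁ hW₁ne
      set G : ℕ → ℂ := fun n => a n - epval W₂ n with hG
      have hGrec : ∀ n, N₁ ≤ n → G (n + 1) = α * G n := by
        intro n hn
        rw [hG]
        dsimp only
        have h1 : a (n + 1) = α * a n + a₁ n := by simp [ha₁]
        rw [h1]
        linear_combination (hW₁ n hn) - hW₂ n
      have hGval := geom_extend hα hGrec
      refine ⟨(C (G N₁ / α ^ N₁), α) :: W₂, N₁, ?_, ?_⟩
      · intro t ht
        rcases List.mem_cons.1 ht with rfl | h
        · exact hα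
        · exact hW₂ne t h
      · intro n hn
        rw [epval_cons, eval_C]
        have := hGval n hn
        rw [hG] at this
        dsimp only at this
        linear_combination this

section Qarith

variable (c : ℕ) (d e : ℤ)

lemma ch2 : ∀ n : ℕ, 2 * (n.choose 2 : ℤ) = n * (n - 1) := by
  intro n
  induction n with
  | zero => simp
  | succ n ih =>
    have h := Nat.choose_succ_succ n 1
    have h1 : n.choose 1 = n := Nat.choose_one_right n
    push_cast [h, h1]
    push_cast at ih
    ring_nf
    ring_nf at ih
    linarith

def qfun : ℕ → ℕ := fun n => ((c : ℤ) * (n.choose 2 : ℤ) + d * n + e).toNat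

lemma choose_step (n : ℕ) : ((n + 1).choose 2 : ℤ) = (n.choose 2 : ℤ) + n := by
  have h1 := ch2 n
  have h2 := ch2 (n + 1)
  push_cast at h2
  nlinarith [h1, h2]

lemma qstep (hc : 1 ≤ c) (hpos : ∀ n : ℕ, 0 ≤ (c : ℤ) * (n.choose 2 : ℤ) + d * n + e) :
    ∀ n : ℕ, (d.natAbs ≤ n) → qfun c d e (n + 1) = qfun c d e n + ((c : ℤ) * n + d).toNat := by
  intro n hn
  have hstep : (c : ℤ) * ((n + 1).choose 2 : ℤ) + d * ((n + 1 : ℕ) : ℤ) + e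
      = ((c : ℤ) * (n.choose 2 : ℤ) + d * n + e) + ((c : ℤ) * n + d) := by
    rw [choose_step]
    push_cast
    ring
  have hnn : 0 ≤ (c : ℤ) * n + d := by
    have h2 : (1 : ℤ) ≤ (c : ℤ) := by exact_mod_cast hc
    have h3 : (0 : ℤ) ≤ (n : ℤ) := Int.natCast_nonneg n
    have h4 : (d.natAbs : ℤ) ≤ (n : ℤ) := by exact_mod_cast hn
    have h5 : -(d.natAbs : ℤ) ≤ d := by omega
    nlinarith [mul_le_mul_of_nonneg_right h2 h3]
  simp only [qfun]
  rw [hstep, Int.toNat_add (hpos n) hnn]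

lemma qgrow (hc : 1 ≤ c) : ∀ T : ℕ, ∃ n₀ : ℕ, ∀ n, n₀ ≤ n → T ≤ qfun c d e n := by
  intro T
  refine ⟨2 * d.natAbs + 3 + T + e.natAbs, fun n hn => ?_⟩
  have hch := ch2 n
  have hc1 : (1 : ℤ) ≤ (c : ℤ) := by exact_mod_cast hc
  have hn0 : (0 : ℤ) ≤ (n : ℤ) := Int.natCast_nonneg n
  have hchnn : 0 ≤ (n.choose 2 : ℤ) := Int.natCast_nonneg _
  have hnZ : 2 * (d.natAbs : ℤ) + 3 + T + (e.natAbs : ℤ) ≤ (n : ℤ) := by exact_mod_cast hn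
  have hkey : ((d.natAbs : ℤ) + 1) * n ≤ (n.choose 2 : ℤ) := by
    have h1 : 2 * ((d.natAbs : ℤ) + 1) ≤ (n : ℤ) - 1 := by omega
    have h2 := mul_le_mul_of_nonneg_left h1 hn0
    nlinarith [hch, h2]
  have hcch : (n.choose 2 : ℤ) ≤ (c : ℤ) * (n.choose 2 : ℤ) := le_mul_of_one_le_left hchnn hc1
  have hd2 : -((d.natAbs : ℤ) * n) ≤ d * n := by
    have h5 : -(d.natAbs : ℤ) ≤ d := by omega
    have := mul_le_mul_of_nonneg_right h5 hn0
    linarith [this]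
  have heE : -(e.natAbs : ℤ) ≤ e := by omega
  have hfin : (T : ℤ) ≤ (c : ℤ) * (n.choose 2 : ℤ) + d * n + e := by nlinarith
  simp only [qfun]
  omega

lemma qcast (hpos : ∀ n : ℕ, 0 ≤ (c : ℤ) * (n.choose 2 : ℤ) + d * n + e) (n : ℕ) :
    ((qfun c d e n : ℕ) : ℂ) =
      (C ((c : ℂ) / 2) * X ^ 2 + C ((d : ℂ) - (c : ℂ) / 2) * X + C (e : ℂ)).eval (n : ℂ) := by
  have h1 : ((qfun c d e n : ℕ) : ℤ) = (c : ℤ) * (n.choose 2 : ℤ) + d * n + e :=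
    Int.toNat_of_nonneg (hpos n)
  have h2 : ((qfun c d e n : ℕ) : ℂ) = (c : ℂ) * (n.choose 2 : ℕ) + (d : ℂ) * n + (e : ℂ) := by
    exact_mod_cast congrArg (fun z : ℤ => (z : ℂ)) h1
  rw [h2]
  have hch : 2 * ((n.choose 2 : ℕ) : ℂ) = (n : ℂ) * ((n : ℂ) - 1) := by
    exact_mod_cast congrArg (fun z : ℤ => (z : ℂ)) (ch2 n)
  simp only [eval_add, eval_mul, eval_C, eval_pow, eval_X]
  linear_combination ((c : ℂ) / 2) * hch

end Qarith

lemma block_g {α : ℂ} (hα : α ≠ 0) (c : ℕ) (d e : ℤ) (hc : 1 ≤ c)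
    (hpos : ∀ n : ℕ, 0 ≤ (c : ℤ) * (n.choose 2 : ℤ) + d * n + e) :
    ∀ n, d.natAbs ≤ n →
      α ^ qfun c d e (n + 1) = (α ^ (d : ℤ)) * (α ^ c) ^ n * α ^ qfun c d e n := by
  intro n hn
  rw [qstep c d e hc hpos n hn, pow_add]
  have hnn : 0 ≤ (c : ℤ) * n + d := by
    have h2 : (1 : ℤ) ≤ (c : ℤ) := by exact_mod_cast hc
    have h3 : (0 : ℤ) ≤ (n : ℤ) := Int.natCast_nonneg n
    have h4 : (d.natAbs : ℤ) ≤ (n : ℤ) := by exact_mod_cast hn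
    have h5 : -(d.natAbs : ℤ) ≤ d := by omega
    nlinarith [mul_le_mul_of_nonneg_right h2 h3]
  have he : α ^ (((c : ℤ) * n + d).toNat) = (α ^ (d : ℤ)) * (α ^ c) ^ n := by
    have h1 : α ^ (((c : ℤ) * n + d).toNat) = α ^ ((((c : ℤ) * n + d).toNat : ℤ)) :=
      (zpow_natCast α _).symm
    rw [h1, Int.toNat_of_nonneg hnn, zpow_add₀ hα, mul_comm]
    congr 1
    rw [show (c : ℤ) * (n : ℤ) = ((c * n : ℕ) : ℤ) by push_cast; ring, zpow_natCast, pow_mul]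
  rw [he]
  ring

/-- bridge: IsCFinite to monic polynomial recurrence -/
lemma bridge (a : ℕ → ℂ) (ha : IsCFinite a) :
    ∃ p : ℂ[X], p.Monic ∧ ∃ N, ∀ m, N ≤ m →
      ∑ i ∈ Finset.range (p.natDegree + 1), p.coeff i * a (m + i) = 0 := by
  obtain ⟨s, γ, hγ⟩ := ha
  rcases Nat.eq_zero_or_pos s with hs | hs
  · subst hs
    refine ⟨1, monic_one, 0, fun m hm => ?_⟩
    have := hγ m (Nat.zero_le m)
    simpa using this
  · set q : ℂ[X] := ∑ i : Fin s, C (γ i) * X ^ (i : ℕ) with hq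
    have hqdeg : q.degree < (s : ℕ) := by
      refine lt_of_le_of_lt (degree_sum_le _ _) ?_
      rw [Finset.sup_lt_iff (by exact_mod_cast WithBot.bot_lt_coe s)]
      intro i _
      refine lt_of_le_of_lt (degree_mul_le _ _) ?_
      refine lt_of_le_of_lt (add_le_add degree_C_le le_rfl) ?_
      rw [zero_add, degree_X_pow]
      exact_mod_cast i.isLt
    set p : ℂ[X] := X ^ s - q with hp
    have hdegp : p.degree = (s : ℕ) := by
      rw [hp, degree_sub_eq_left_of_degree_lt (by rwa [degree_X_pow]), degree_X_pow]
    have hndegp : p.natDegree = s := natDegree_eq_of_degree_eq_some hdegp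
    have hmonic : p.Monic := by
      rw [Monic, leadingCoeff, hndegp, hp, coeff_sub, coeff_X_pow, if_pos rfl,
        coeff_eq_zero_of_degree_lt hqdeg]
      ring
    refine ⟨p, hmonic, s, fun m hm => ?_⟩
    rw [hndegp, Finset.sum_range_succ]
    have hcs : p.coeff s = 1 := by
      rw [hp, coeff_sub, coeff_X_pow, if_pos rfl, coeff_eq_zero_of_degree_lt hqdeg]; ring
    have hci : ∀ i ∈ Finset.range s, p.coeff i * a (m + i) = -(q.coeff i * a (m + i)) := by
      intro i hi
      have his := Finset.mem_range.1 hi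
      rw [hp, coeff_sub, coeff_X_pow, if_neg (by omega)]
      ring
    rw [Finset.sum_congr rfl hci, hcs, one_mul, Finset.sum_neg_distrib]
    have hqc : ∑ i ∈ Finset.range s, q.coeff i * a (m + i) = ∑ i : Fin s, γ i * a (m + i) := by
      have hco : ∀ j, q.coeff j = ∑ i : Fin s, (if j = (i : ℕ) then γ i else 0) := by
        intro j
        rw [hq, finset_sum_coeff]
        refine Finset.sum_congr rfl fun i _ => ?_
        rw [coeff_C_mul, coeff_X_pow]
        split <;> simp
      calc ∑ j ∈ Finset.range s, q.coeff j * a (m + j)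
          = ∑ j ∈ Finset.range s, ∑ i : Fin s, (if j = (i : ℕ) then γ i else 0) * a (m + j) := by
            refine Finset.sum_congr rfl fun j _ => ?_
            rw [hco j, Finset.sum_mul]
        _ = ∑ i : Fin s, ∑ j ∈ Finset.range s, (if j = (i : ℕ) then γ i else 0) * a (m + j) :=
            Finset.sum_comm
        _ = ∑ i : Fin s, γ i * a (m + i) := by
            refine Finset.sum_congr rfl fun i _ => ?_
            simp only [ite_mul, zero_mul]
            rw [Finset.sum_ite_eq', if_pos (Finset.mem_range.2 i.isLt)]
    rw [hqc, ← hγ m hm]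
    ring


lemma epval_qblocks (c : ℕ) (d e : ℤ) (Qc : ℂ[X])
    (hq : ∀ n : ℕ, ((qfun c d e n : ℕ) : ℂ) = Qc.eval (n : ℂ)) :
    ∀ (W : List (ℂ[X] × ℂ)) (n : ℕ),
    epval W (qfun c d e n) = bval (W.map fun t =>
      ⟨[(t.1.comp Qc, 1)], fun m => t.2 ^ qfun c d e m, t.2 ^ (d : ℤ), t.2 ^ c⟩) n := by
  intro W n
  induction W with
  | nil => simp [bval]
  | cons t W ih =>
    have hco : bval ((Blk.mk [(t.1.comp Qc, 1)] (fun m => t.2 ^ qfun c d e m)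
          (t.2 ^ (d : ℤ)) (t.2 ^ c)) :: (W.map fun t =>
        ⟨[(t.1.comp Qc, 1)], fun m => t.2 ^ qfun c d e m, t.2 ^ (d : ℤ), t.2 ^ c⟩)) n
        = epval [(t.1.comp Qc, 1)] n * t.2 ^ qfun c d e n + bval (W.map fun t =>
        ⟨[(t.1.comp Qc, 1)], fun m => t.2 ^ qfun c d e m, t.2 ^ (d : ℤ), t.2 ^ c⟩) n := rfl
    rw [List.map_cons, hco, epval_cons, ← ih]
    congr 1
    rw [epval_cons, epval_nil, add_zero, one_pow, mul_one, eval_comp, ← hq n]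

theorem c2finite_quadratic_subseq (a : ℕ → ℂ) (ha : IsCFinite a)
    (c : ℕ) (hc : 1 ≤ c) (d e : ℤ)
    (hpos : ∀ n : ℕ, 0 ≤ (c : ℤ) * (n.choose 2 : ℤ) + d * n + e) :
    IsC2Finite (fun n => a ((c : ℤ) * (n.choose 2 : ℤ) + d * n + e).toNat) := by
  classical
  obtain ⟨p, hmonic, N0, hrec⟩ := bridge a ha
  obtain ⟨W, NA, hWne, hWval⟩ := stageA p.natDegree p hmonic rfl a N0 hrec
  set Qc : ℂ[X] := C ((c : ℂ) / 2) * X ^ 2 + C ((d : ℂ) - (c : ℂ) / 2) * X + C (e : ℂ) with hQc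
  set Bs : List Blk := W.map fun t =>
    ⟨[(t.1.comp Qc, 1)], fun m => t.2 ^ qfun c d e m, t.2 ^ (d : ℤ), t.2 ^ c⟩ with hBs
  obtain ⟨n₂, hn₂⟩ := qgrow c d e hc NA
  set N : ℕ := max d.natAbs n₂ with hN
  have hOK : ∀ B ∈ Bs, BlkOK N B := by
    intro B hB
    obtain ⟨t, ht, rfl⟩ := List.mem_map.1 hB
    intro n hn
    exact block_g (hWne t ht) c d e hc hpos n (le_trans (le_max_left _ _) hn)
  have hbv : ∀ n, N ≤ n → a (qfun c d e n) = bval Bs n := by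
    intro n hn
    rw [hWval (qfun c d e n) (hn₂ n (le_trans (le_max_right _ _) hn)), hBs]
    exact epval_qblocks c d e Qc (qcast c d e hpos) W n
  have hkill : Killable (fun n => a (qfun c d e n)) :=
    killable_congr hbv (killBlocks N Bs.length Bs le_rfl hOK)
  exact nice_isC2Finite (killable_nice hkill)

end
end

section
/- If (a_n) is a C-finite sequence over ℂ, then the subsequence b_n = a_{n²} is C²-finite. -/
open Polynomial
noncomputable section
namespace C2Aux

/-- evaluation of a geometric combination -/
def gEval (L : List (ℂ × ℂ)) (n : ℕ) : ℂ := (L.map fun x => x.1 * x.2 ^ n).sum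

def IsGeomComb (f : ℕ → ℂ) : Prop := ∃ L : List (ℂ × ℂ), ∀ n, f n = gEval L n

lemma gEval_nil (n : ℕ) : gEval [] n = 0 := rfl
lemma gEval_cons (x : ℂ × ℂ) (L : List (ℂ × ℂ)) (n : ℕ) :
    gEval (x :: L) n = x.1 * x.2 ^ n + gEval L n := rfl

lemma geom_prod_aux (L : List (ℂ × ℂ)) :
    (((L.map fun x => X - C x.2).prod : ℂ[X]).Monic) ∧
    ((L.map fun x => X - C x.2).prod : ℂ[X]).natDegree = L.length := by
  induction L with
  | nil => simp [Polynomial.monic_one]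
  | cons h t ih =>
    have hm : (X - C h.2 : ℂ[X]).Monic := monic_X_sub_C h.2
    constructor
    · simpa using hm.mul ih.1
    · simp only [List.map_cons, List.prod_cons, List.length_cons]
      rw [Polynomial.natDegree_mul hm.ne_zero ih.1.ne_zero, ih.2]
      simp [natDegree_X_sub_C]; ring

lemma geomComb_isCFinite {f : ℕ → ℂ} (hf : IsGeomComb f) : IsCFinite f := by
  obtain ⟨L, hL⟩ := hf
  set Q : ℂ[X] := (L.map fun x => X - C x.2).prod with hQ
  obtain ⟨hMon, hDeg⟩ := geom_prod_aux L
  set s := L.length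
  refine ⟨s, fun i => -Q.coeff i, ?_⟩
  -- each base is a root of Q
  have hroot : ∀ x ∈ L, Q.eval x.2 = 0 := by
    intro x hx
    rw [hQ, Polynomial.eval_list_prod]
    apply List.prod_eq_zero
    simp only [List.map_map]
    refine List.mem_map.2 ⟨x, hx, ?_⟩
    simp
  -- power identity for each root
  have hpow : ∀ ν : ℂ, Q.eval ν = 0 → ∀ n : ℕ,
      ν ^ (n + s) = ∑ i : Fin s, (-Q.coeff i) * ν ^ (n + (i : ℕ)) := by
    intro ν hν n
    have he := Polynomial.eval_eq_sum_range (p := Q) ν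
    rw [hν, hDeg, Finset.sum_range_succ] at he
    have hc : Q.coeff s = 1 := by
      have := hMon.leadingCoeff
      rwa [Polynomial.leadingCoeff, hDeg] at this
    rw [hc, one_mul] at he
    have hνs : ν ^ s = ∑ i ∈ Finset.range s, (-Q.coeff i) * ν ^ i := by
      have h2 : ∑ i ∈ Finset.range s, (-Q.coeff i) * ν ^ i
          = -∑ i ∈ Finset.range s, Q.coeff i * ν ^ i := by
        rw [← Finset.sum_neg_distrib]
        exact Finset.sum_congr rfl (by intros; ring)
      rw [h2]; linear_combination -he
    rw [Fin.sum_univ_eq_sum_range (fun i => (-Q.coeff i) * ν ^ (n + i)) s]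
    calc ν ^ (n + s) = ν ^ n * ν ^ s := by rw [pow_add]
    _ = ν ^ n * ∑ i ∈ Finset.range s, (-Q.coeff i) * ν ^ i := by rw [hνs]
    _ = ∑ i ∈ Finset.range s, (-Q.coeff i) * ν ^ (n + i) := by
        rw [Finset.mul_sum]; exact Finset.sum_congr rfl (by intros; rw [pow_add]; ring)
  intro n _
  simp only [hL]
  -- prove for any sublist whose bases are roots
  have main : ∀ L' : List (ℂ × ℂ), (∀ x ∈ L', Q.eval x.2 = 0) →
      gEval L' (n + s) = ∑ i : Fin s, (-Q.coeff i) * gEval L' (n + i) := by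
    intro L' hL'
    induction L' with
    | nil => simp [gEval_nil]
    | cons h t ih =>
      have hh := hL' h (by simp)
      have ht : ∀ x ∈ t, Q.eval x.2 = 0 := fun x hx => hL' x (by simp [hx])
      simp only [gEval_cons]
      rw [ih ht, hpow h.2 hh n, Finset.mul_sum, ← Finset.sum_add_distrib]
      exact Finset.sum_congr rfl (by intros; ring)
  simpa using main L hroot

lemma gEval_append (L₁ L₂ : List (ℂ × ℂ)) (n : ℕ) :
    gEval (L₁ ++ L₂) n = gEval L₁ n + gEval L₂ n := by
  simp [gEval]

lemma IsGeomComb.zero : IsGeomComb (fun _ => 0) := ⟨[], fun n => rfl⟩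

lemma IsGeomComb.geom (β ρ : ℂ) : IsGeomComb (fun n => β * ρ ^ n) :=
  ⟨[(β, ρ)], fun n => by simp [gEval]⟩

lemma IsGeomComb.add {f g : ℕ → ℂ} (hf : IsGeomComb f) (hg : IsGeomComb g) :
    IsGeomComb (fun n => f n + g n) := by
  obtain ⟨L₁, h₁⟩ := hf; obtain ⟨L₂, h₂⟩ := hg
  exact ⟨L₁ ++ L₂, fun n => by dsimp only; rw [gEval_append, h₁, h₂]⟩

lemma IsGeomComb.geom_mul {f : ℕ → ℂ} (hf : IsGeomComb f) (β ρ : ℂ) :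
    IsGeomComb (fun n => β * ρ ^ n * f n) := by
  obtain ⟨L, h⟩ := hf
  refine ⟨L.map fun x => (β * x.1, ρ * x.2), fun n => ?_⟩
  dsimp only; rw [h]
  clear h
  induction L with
  | nil => simp [gEval]
  | cons hd t ih => simp only [List.map_cons, gEval_cons, mul_add, ih, mul_pow]; ring_nf

lemma IsGeomComb.sub {f g : ℕ → ℂ} (hf : IsGeomComb f) (hg : IsGeomComb g) :
    IsGeomComb (fun n => f n - g n) := by
  have := hf.add ((hg.geom_mul (-1) 1))
  simpa [sub_eq_add_neg] using this

lemma IsGeomComb.shift {f : ℕ → ℂ} (hf : IsGeomComb f) (t : ℕ) :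
    IsGeomComb (fun n => f (n + t)) := by
  obtain ⟨L, h⟩ := hf
  refine ⟨L.map fun x => (x.1 * x.2 ^ t, x.2), fun n => ?_⟩
  dsimp only; rw [h]
  clear h
  induction L with
  | nil => simp [gEval]
  | cons hd tl ih => simp only [List.map_cons, gEval_cons, ih, pow_add]; ring_nf

lemma IsGeomComb.const (β : ℂ) : IsGeomComb (fun _ => β) := by
  simpa using IsGeomComb.geom β 1


lemma polySolve (ν lam : ℂ) (hν : ν ≠ 0) (p : ℂ[X]) :
    ∃ q : ℂ[X], C ν * q.comp (X + 1) - C lam * q = p := by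
  set T : ℂ[X] → ℂ[X] := fun q => C ν * q.comp (X + 1) - C lam * q with hT
  have Tadd : ∀ q₁ q₂, T (q₁ + q₂) = T q₁ + T q₂ := by
    intro q₁ q₂; simp only [hT, add_comp]; ring
  suffices h : ∀ d : ℕ, ∀ p : ℂ[X], p.natDegree ≤ d → ∃ q, T q = p by
    exact h p.natDegree p le_rfl
  intro d
  induction d with
  | zero =>
    intro p hp
    have hpc : p = C (p.coeff 0) := eq_C_of_natDegree_le_zero hp
    by_cases hvl : ν = lam
    · subst hvl
      refine ⟨C (p.coeff 0 / ν) * X, ?_⟩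
      simp only [hT, mul_comp, C_comp, X_comp]
      have h1 : C ν * (C (p.coeff 0 / ν) * (X + 1)) - C ν * (C (p.coeff 0 / ν) * X)
          = C (ν * (p.coeff 0 / ν)) := by rw [C_mul]; ring
      rw [h1]
      conv_rhs => rw [hpc]
      congr 1
      field_simp
    · have hνl : ν - lam ≠ 0 := sub_ne_zero.2 hvl
      refine ⟨C (p.coeff 0 / (ν - lam)), ?_⟩
      simp only [hT, C_comp]
      rw [← C_mul, ← C_mul, ← C_sub]
      conv_rhs => rw [hpc]
      congr 1
      field_simp
  | succ d ih =>
    intro p hp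
    set e := p.coeff (d + 1) with he
    by_cases hvl : ν = lam
    · have hd2 : (ν * ((d : ℂ) + 2)) ≠ 0 := by
        have h2 : ((d + 2 : ℕ) : ℂ) ≠ 0 := Nat.cast_ne_zero.mpr (by omega)
        push_cast at h2
        exact mul_ne_zero hν h2
      set q₀ : ℂ[X] := C (e / (ν * ((d:ℂ) + 2))) * X ^ (d + 2) with hq₀
      have hcoeff : ∀ m : ℕ, (T q₀).coeff m =
          (e / (ν * ((d:ℂ) + 2))) * ν * (((d+2).choose m : ℂ) - if m = d + 2 then 1 else 0) := by
        intro m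
        simp only [hT, hq₀, mul_comp, C_comp, X_pow_comp, ← hvl]
        rw [show C ν * (C (e / (ν * ((d:ℂ) + 2))) * (X + 1) ^ (d + 2))
              - C ν * (C (e / (ν * ((d:ℂ) + 2))) * X ^ (d + 2))
            = C (e / (ν * ((d:ℂ) + 2)) * ν) * ((X + 1) ^ (d + 2) - X ^ (d + 2)) from by
          rw [C_mul]; ring]
        rw [coeff_C_mul, coeff_sub, coeff_X_add_one_pow, coeff_X_pow]
      have hrd : (p - T q₀).natDegree ≤ d := by
        rw [natDegree_le_iff_coeff_eq_zero]
        intro m hm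
        rw [coeff_sub, hcoeff m]
        rcases Nat.lt_or_ge m (d + 2) with hlt | hge
        · have hm1 : m = d + 1 := by omega
          subst hm1
          rw [if_neg (by omega), he]
          rw [Nat.choose_succ_self_right]
          push_cast
          field_simp
          rw [show ((d:ℂ) + 1 + 1 - 0) = (d:ℂ) + 2 by ring, div_self (right_ne_zero_of_mul hd2)]
          ring
        · have hp0 : p.coeff m = 0 :=
            coeff_eq_zero_of_natDegree_lt (by omega)
          rcases Nat.eq_or_lt_of_le hge with heq | hlt2
          · rw [hp0, ← heq, if_pos rfl, Nat.choose_self]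
            simp
          · rw [hp0, if_neg (by omega), Nat.choose_eq_zero_of_lt (by omega)]
            simp
      obtain ⟨q₁, hq₁⟩ := ih (p - T q₀) hrd
      exact ⟨q₀ + q₁, by rw [Tadd, hq₁]; ring⟩
    · set q₀ : ℂ[X] := C (e / (ν - lam)) * X ^ (d + 1) with hq₀
      have hνl : ν - lam ≠ 0 := sub_ne_zero.2 hvl
      have hcoeff : ∀ m : ℕ, (T q₀).coeff m =
          (e / (ν - lam)) * (ν * (((d+1).choose m : ℂ)) - lam * if m = d + 1 then 1 else 0) := by
        intro m
        simp only [hT, hq₀, mul_comp, C_comp, X_pow_comp]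
        rw [show C ν * (C (e / (ν - lam)) * (X + 1) ^ (d + 1))
              - C lam * (C (e / (ν - lam)) * X ^ (d + 1))
            = C (e / (ν - lam)) * (C ν * (X + 1) ^ (d + 1) - C lam * X ^ (d + 1)) from by ring]
        rw [coeff_C_mul, coeff_sub, coeff_C_mul, coeff_C_mul, coeff_X_add_one_pow, coeff_X_pow]
      have hrd : (p - T q₀).natDegree ≤ d := by
        rw [natDegree_le_iff_coeff_eq_zero]
        intro m hm
        rw [coeff_sub, hcoeff m]
        rcases Nat.lt_or_ge m (d + 2) with hlt | hge
        · have hm1 : m = d + 1 := by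
            omega
          subst hm1
          rw [if_pos rfl, he, Nat.choose_self]
          field_simp
          push_cast; ring
        · have hp0 : p.coeff m = 0 := coeff_eq_zero_of_natDegree_lt (by omega)
          rw [hp0, if_neg (by omega), Nat.choose_eq_zero_of_lt (by omega)]
          simp
      obtain ⟨q₁, hq₁⟩ := ih (p - T q₀) hrd
      exact ⟨q₀ + q₁, by rw [Tadd, hq₁]; ring⟩

def shiftE : Module.End ℂ (ℕ → ℂ) where
  toFun a := fun n => a (n + 1)
  map_add' _ _ := rfl
  map_smul' _ _ := rfl

lemma shiftE_pow (k : ℕ) : ∀ (a : ℕ → ℂ) (n : ℕ), (shiftE ^ k) a n = a (n + k) := by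
  induction k with
  | zero => intro a n; simp
  | succ k ih =>
    intro a n
    rw [pow_succ']
    have : (shiftE * shiftE ^ k) a = shiftE ((shiftE ^ k) a) := rfl
    rw [this]
    show ((shiftE ^ k) a) (n + 1) = a (n + (k+1))
    rw [ih]
    congr 1
    omega

def epEval (L : List (ℂ × ℂ[X])) (n : ℕ) : ℂ := (L.map fun q => q.2.eval (n : ℂ) * q.1 ^ n).sum

lemma epEval_nil (n : ℕ) : epEval [] n = 0 := rfl
lemma epEval_cons (x : ℂ × ℂ[X]) (L : List (ℂ × ℂ[X])) (n : ℕ) :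
    epEval (x :: L) n = x.2.eval (n : ℂ) * x.1 ^ n + epEval L n := rfl
lemma epEval_append (L₁ L₂ : List (ℂ × ℂ[X])) (n : ℕ) :
    epEval (L₁ ++ L₂) n = epEval L₁ n + epEval L₂ n := by simp [epEval]

/-- antidifference for exp-polys: find F with F(n+1) - lam*F(n) = epEval L n -/
lemma epAntidiff (lam : ℂ) (L : List (ℂ × ℂ[X])) (hL : ∀ q ∈ L, q.1 ≠ 0) :
    ∃ M : List (ℂ × ℂ[X]), (∀ q ∈ M, q.1 ≠ 0) ∧
      ∀ n : ℕ, epEval M (n + 1) - lam * epEval M n = epEval L n := by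
  induction L with
  | nil => exact ⟨[], by simp, fun n => by simp [epEval_nil]⟩
  | cons x t ih =>
    obtain ⟨M, hM, hMe⟩ := ih (fun q hq => hL q (by simp [hq]))
    have hx : x.1 ≠ 0 := hL x (by simp)
    obtain ⟨q, hq⟩ := polySolve x.1 lam hx x.2
    refine ⟨(x.1, q) :: M, ?_, ?_⟩
    · intro y hy
      rcases List.mem_cons.1 hy with h | h
      · rw [h]; exact hx
      · exact hM y h
    · intro n
      rw [epEval_cons, epEval_cons, epEval_cons]
      have key : q.eval ((n:ℂ) + 1) * x.1 ^ (n + 1) - lam * (q.eval (n:ℂ) * x.1 ^ n)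
          = x.2.eval (n:ℂ) * x.1 ^ n := by
        have := congrArg (fun r => Polynomial.eval (n : ℂ) r) hq
        simp only [eval_sub, eval_mul, eval_C, eval_comp, eval_add, eval_X, eval_one] at this
        calc q.eval ((n:ℂ) + 1) * x.1 ^ (n + 1) - lam * (q.eval (n:ℂ) * x.1 ^ n)
            = (x.1 * q.eval ((n:ℂ) + 1) - lam * q.eval (n:ℂ)) * x.1 ^ n := by
              rw [pow_succ]; ring
          _ = x.2.eval (n:ℂ) * x.1 ^ n := by rw [this]
      push_cast
      calc q.eval ((n:ℂ) + 1) * x.1 ^ (n + 1) + epEval M (n + 1)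
            - lam * (q.eval (n:ℂ) * x.1 ^ n + epEval M n)
          = (q.eval ((n:ℂ) + 1) * x.1 ^ (n + 1) - lam * (q.eval (n:ℂ) * x.1 ^ n))
            + (epEval M (n + 1) - lam * epEval M n) := by ring
        _ = x.2.eval (n:ℂ) * x.1 ^ n + epEval t n := by rw [key, hMe n]

lemma epShiftDown (L : List (ℂ × ℂ[X])) (hL : ∀ q ∈ L, q.1 ≠ 0) :
    ∀ m : ℕ, 1 ≤ m →
      epEval (L.map fun q => (q.1, C (q.1)⁻¹ * q.2.comp (X - 1))) m = epEval L (m - 1) := by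
  intro m hm
  induction L with
  | nil => simp [epEval_nil]
  | cons x t ih =>
    have hx : x.1 ≠ 0 := hL x (by simp)
    have ht := ih (fun q hq => hL q (by simp [hq]))
    simp only [List.map_cons, epEval_cons, ht]
    congr 1
    rw [eval_mul, eval_C, eval_comp, eval_sub, eval_X, eval_one]
    have hc : ((m:ℂ) - 1) = ((m - 1 : ℕ) : ℂ) := by
      rw [Nat.cast_sub hm]; norm_num
    rw [hc]
    have hpow : x.1 ^ m = x.1 ^ (m - 1) * x.1 := by
      rw [← pow_succ]; congr 1; omega
    rw [hpow]
    field_simp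

lemma expPolyRep : ∀ (d : ℕ) (P : ℂ[X]), P.Monic → P.natDegree = d →
    ∀ (a : ℕ → ℂ) (N : ℕ), (∀ n, N ≤ n → (Polynomial.aeval shiftE P) a n = 0) →
    ∃ (L : List (ℂ × ℂ[X])) (N' : ℕ), (∀ q ∈ L, q.1 ≠ 0) ∧ ∀ n, N' ≤ n → a n = epEval L n := by
  intro d
  induction d with
  | zero =>
    intro P hM hD a N hrec
    have hP : P = 1 := hM.natDegree_eq_zero.mp hD
    refine ⟨[], N, by simp, ?_⟩
    intro n hn
    have h0 := hrec n hn
    rw [hP, map_one] at h0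
    exact h0
  | succ d ih =>
    intro P hM hD a N hrec
    have hdeg : 0 < P.degree := by
      rw [degree_eq_natDegree hM.ne_zero, hD]
      exact_mod_cast Nat.succ_pos d
    obtain ⟨lam, hlam⟩ := Complex.exists_root hdeg
    obtain ⟨Q, hQ0⟩ := dvd_iff_isRoot.2 hlam
    have hQ : P = Q * (X - C lam) := by rw [hQ0, mul_comm]
    have hXm : (X - C lam : ℂ[X]).Monic := monic_X_sub_C lam
    have hQm : Q.Monic := Monic.of_mul_monic_right hXm (hQ ▸ hM)
    have hQd : Q.natDegree = d := by
      have hnd : P.natDegree = Q.natDegree + (X - C lam : ℂ[X]).natDegree := by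
        rw [hQ, natDegree_mul hQm.ne_zero hXm.ne_zero]
      rw [hD, natDegree_X_sub_C] at hnd
      omega
    set a' : ℕ → ℂ := (Polynomial.aeval shiftE (X - C lam)) a with ha'
    have ha'def : ∀ n, a' n = a (n + 1) - lam * a n := by
      intro n
      rw [ha', map_sub, aeval_X, aeval_C]
      show shiftE a n - (algebraMap ℂ (Module.End ℂ (ℕ → ℂ)) lam) a n = _
      rw [Module.algebraMap_end_apply]
      rfl
    have hrec' : ∀ n, N ≤ n → (Polynomial.aeval shiftE Q) a' n = 0 := by
      intro n hn
      have h0 := hrec n hn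
      rw [hQ, map_mul] at h0
      rw [ha']
      simpa [Module.End.mul_apply] using h0
    obtain ⟨L', N₁, hL'nz, hL'⟩ := ih Q hQm hQd a' N hrec'
    by_cases hlz : lam = 0
    · refine ⟨L'.map (fun q => (q.1, C (q.1)⁻¹ * q.2.comp (X - 1))), N₁ + 1, ?_, ?_⟩
      · intro y hy
        obtain ⟨q, hq, rfl⟩ := List.mem_map.1 hy
        exact hL'nz q hq
      · intro n hn
        rw [epShiftDown L' hL'nz n (by omega)]
        have h1 : a n = a' (n - 1) := by
          rw [ha'def, hlz]
          simp only [zero_mul, sub_zero]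
          congr 1
          omega
        rw [h1, hL' (n - 1) (by omega)]
    · obtain ⟨M, hMnz, hMe⟩ := epAntidiff lam L' hL'nz
      set κ : ℂ := (a N₁ - epEval M N₁) * (lam ^ N₁)⁻¹ with hκ
      refine ⟨(lam, C κ) :: M, N₁, ?_, ?_⟩
      · intro y hy
        rcases List.mem_cons.1 hy with h | h
        · rw [h]; exact hlz
        · exact hMnz y h
      · intro n hn
        induction n, hn using Nat.le_induction with
        | base =>
          rw [epEval_cons, eval_C, hκ]
          have : lam ^ N₁ ≠ 0 := pow_ne_zero _ hlz
          field_simp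
          ring
        | succ n hn ihn =>
          have h1 : a (n + 1) = a' n + lam * a n := by rw [ha'def]; ring
          rw [h1, hL' n hn, ihn, epEval_cons, epEval_cons, eval_C, eval_C]
          have h2 := hMe n
          push_cast
          calc epEval L' n + lam * (κ * lam ^ n + epEval M n)
              = κ * (lam ^ n * lam) + ((epEval L' n + lam * epEval M n)) := by ring
            _ = κ * lam ^ (n + 1) + epEval M (n + 1) := by
                rw [← pow_succ]; linear_combination -h2


def opA (ρ c : ℂ) (f : ℕ → ℂ) : ℕ → ℂ := fun n => f (n + 1) - c * ρ ^ n * f n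

def applyOps : List (ℂ × ℂ) → (ℕ → ℂ) → (ℕ → ℂ)
  | [], f => f
  | x :: xs, f => applyOps xs (opA x.1 x.2 f)

lemma applyOps_cons (x : ℂ × ℂ) (xs : List (ℂ × ℂ)) (f : ℕ → ℂ) :
    applyOps (x :: xs) f = applyOps xs (opA x.1 x.2 f) := rfl

lemma applyOps_append (l₁ l₂ : List (ℂ × ℂ)) (f : ℕ → ℂ) :
    applyOps (l₁ ++ l₂) f = applyOps l₂ (applyOps l₁ f) := by
  induction l₁ generalizing f with
  | nil => rfl
  | cons x xs ih => rw [List.cons_append, applyOps_cons, applyOps_cons, ih]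

lemma applyOps_add (ops : List (ℂ × ℂ)) (f g : ℕ → ℂ) (n : ℕ) :
    applyOps ops (fun m => f m + g m) n = applyOps ops f n + applyOps ops g n := by
  induction ops generalizing f g with
  | nil => rfl
  | cons x xs ih =>
    rw [applyOps_cons, applyOps_cons, applyOps_cons]
    have h : opA x.1 x.2 (fun m => f m + g m)
        = fun m => opA x.1 x.2 f m + opA x.1 x.2 g m := by
      funext m; simp only [opA]; ring
    rw [h, ih]

lemma applyOps_zero (ops : List (ℂ × ℂ)) (n : ℕ) :
    applyOps ops (fun _ => 0) n = 0 := by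
  induction ops generalizing n with
  | nil => rfl
  | cons x xs ih =>
    rw [applyOps_cons]
    have h : opA x.1 x.2 (fun _ => (0:ℂ)) = fun _ => (0:ℂ) := by
      funext m; simp [opA]
    rw [h, ih]

def slEval (lam : ℂ) (L : List (ℂ × ℂ[X])) (n : ℕ) : ℂ :=
  (L.map fun q => q.2.eval (n : ℂ) * q.1 ^ n * lam ^ (n ^ 2)).sum

lemma slEval_nil (lam : ℂ) (n : ℕ) : slEval lam [] n = 0 := rfl
lemma slEval_cons (lam : ℂ) (x : ℂ × ℂ[X]) (L : List (ℂ × ℂ[X])) (n : ℕ) :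
    slEval lam (x :: L) n = x.2.eval (n : ℂ) * x.1 ^ n * lam ^ (n ^ 2) + slEval lam L n := rfl

/-- single term action of an operator, merged form (for ρ = lam ^ 2) -/
lemma opA_term_same (lam c ν : ℂ) (p : ℂ[X]) (n : ℕ) :
    opA (lam ^ 2) c (fun m => p.eval (m : ℂ) * ν ^ m * lam ^ (m ^ 2)) n
      = (C (lam * ν) * p.comp (X + 1) - C c * p).eval (n : ℂ)
          * (lam ^ 2 * ν) ^ n * lam ^ (n ^ 2) := by
  simp only [opA, eval_sub, eval_mul, eval_C, eval_comp, eval_add, eval_X, eval_one]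
  have hsq : (n + 1) ^ 2 = n ^ 2 + 2 * n + 1 := by ring
  push_cast
  simp only [hsq, pow_add, pow_mul, mul_pow, pow_succ, pow_one]
  ring

/-- single term action, split form (general ρ) -/
lemma opA_term_gen (lam ρ c ν : ℂ) (p : ℂ[X]) (n : ℕ) :
    opA ρ c (fun m => p.eval (m : ℂ) * ν ^ m * lam ^ (m ^ 2)) n
      = (C (lam * ν) * p.comp (X + 1)).eval (n : ℂ) * (lam ^ 2 * ν) ^ n * lam ^ (n ^ 2)
        + (C (-c) * p).eval (n : ℂ) * (ρ * ν) ^ n * lam ^ (n ^ 2) := by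
  simp only [opA, eval_mul, eval_C, eval_comp, eval_add, eval_X, eval_one, eval_neg]
  have hsq : (n + 1) ^ 2 = n ^ 2 + 2 * n + 1 := by ring
  push_cast
  simp only [hsq, pow_add, pow_mul, mul_pow, pow_succ, pow_one]
  ring

def mergeStep (lam c : ℂ) (L : List (ℂ × ℂ[X])) : List (ℂ × ℂ[X]) :=
  L.map fun q => (lam ^ 2 * q.1, C (lam * q.1) * q.2.comp (X + 1) - C c * q.2)

def splitStep (lam ρ c : ℂ) (L : List (ℂ × ℂ[X])) : List (ℂ × ℂ[X]) :=
  L.flatMap fun q => [(lam ^ 2 * q.1, C (lam * q.1) * q.2.comp (X + 1)), (ρ * q.1, C (-c) * q.2)]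

lemma opA_slEval_same (lam c : ℂ) (L : List (ℂ × ℂ[X])) (n : ℕ) :
    opA (lam ^ 2) c (slEval lam L) n = slEval lam (mergeStep lam c L) n := by
  induction L with
  | nil => simp [slEval_nil, opA, mergeStep]
  | cons x t ih =>
    have hadd : opA (lam ^ 2) c (slEval lam (x :: t)) n
        = opA (lam ^ 2) c (fun m => x.2.eval (m : ℂ) * x.1 ^ m * lam ^ (m ^ 2)) n
          + opA (lam ^ 2) c (slEval lam t) n := by
      simp only [opA, slEval_cons]; ring
    rw [hadd, ih, opA_term_same]
    simp only [mergeStep, List.map_cons, slEval_cons]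

lemma opA_slEval_gen (lam ρ c : ℂ) (L : List (ℂ × ℂ[X])) (n : ℕ) :
    opA ρ c (slEval lam L) n = slEval lam (splitStep lam ρ c L) n := by
  induction L with
  | nil => simp [slEval_nil, opA, splitStep]
  | cons x t ih =>
    have hadd : opA ρ c (slEval lam (x :: t)) n
        = opA ρ c (fun m => x.2.eval (m : ℂ) * x.1 ^ m * lam ^ (m ^ 2)) n
          + opA ρ c (slEval lam t) n := by
      simp only [opA, slEval_cons]; ring
    rw [hadd, ih, opA_term_gen]
    simp only [splitStep, List.flatMap_cons, List.cons_append, List.nil_append, slEval_cons]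
    ring

lemma degStep (p : ℂ[X]) (d : ℕ) (hp : p.natDegree ≤ d + 1) :
    (p.comp (X + 1) - p).natDegree ≤ d := by
  have hX1 : (X + 1 : ℂ[X]).natDegree = 1 := by
    simpa using natDegree_X_add_C (1 : ℂ)
  have hcompdeg : (p.comp (X + 1)).natDegree = p.natDegree := by
    rw [natDegree_comp, hX1, mul_one]
  rw [natDegree_le_iff_coeff_eq_zero]
  intro m hm
  rw [coeff_sub]
  by_cases hmp : p.natDegree < m
  · rw [coeff_eq_zero_of_natDegree_lt hmp, coeff_eq_zero_of_natDegree_lt (by omega), sub_zero]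
  · have hme : m = p.natDegree := by omega
    subst hme
    have h2 : (p.comp (X + 1)).coeff p.natDegree = (p.comp (X + 1)).leadingCoeff := by
      rw [Polynomial.leadingCoeff, hcompdeg]
    rw [h2, leadingCoeff_comp (by rw [hX1]; omega)]
    have h3 : (X + 1 : ℂ[X]).leadingCoeff = 1 := by
      simpa using (monic_X_add_C (1 : ℂ)).leadingCoeff
    rw [h3, one_pow, mul_one, Polynomial.leadingCoeff, sub_self]

lemma killHead (lam : ℂ) :
    ∀ (d : ℕ) (ν : ℂ) (p : ℂ[X]) (L : List (ℂ × ℂ[X])), p.natDegree ≤ d →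
    ∃ (ops : List (ℂ × ℂ)) (L' : List (ℂ × ℂ[X])), L'.length = L.length ∧
      ∀ n, applyOps ops (slEval lam ((ν, p) :: L)) n = slEval lam L' n := by
  intro d
  induction d with
  | zero =>
    intro ν p L hp
    refine ⟨[(lam ^ 2, lam * ν)], mergeStep lam (lam * ν) L, by simp [mergeStep], ?_⟩
    intro n
    rw [applyOps_cons]
    show opA (lam ^ 2) (lam * ν) (slEval lam ((ν, p) :: L)) n = _
    rw [opA_slEval_same]
    have hpc : p = C (p.coeff 0) := eq_C_of_natDegree_le_zero hp
    simp only [mergeStep, List.map_cons, slEval_cons]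
    rw [show C (lam * ν) * p.comp (X + 1) - C (lam * ν) * p = 0 from by
      rw [hpc]; simp [C_comp]]
    simp [mergeStep]
  | succ d ih =>
    intro ν p L hp
    have hd : (C (lam * ν) * p.comp (X + 1) - C (lam * ν) * p).natDegree ≤ d := by
      rw [← mul_sub]
      exact le_trans (natDegree_C_mul_le _ _) (degStep p d hp)
    obtain ⟨ops', L'', hlen, heq⟩ := ih (lam ^ 2 * ν)
      (C (lam * ν) * p.comp (X + 1) - C (lam * ν) * p) (mergeStep lam (lam * ν) L) hd
    refine ⟨(lam ^ 2, lam * ν) :: ops', L'', by simpa [mergeStep] using hlen, ?_⟩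
    intro n
    rw [applyOps_cons]
    have hfun : opA (lam ^ 2) (lam * ν) (slEval lam ((ν, p) :: L))
        = slEval lam ((lam ^ 2 * ν, C (lam * ν) * p.comp (X + 1) - C (lam * ν) * p)
            :: mergeStep lam (lam * ν) L) := by
      funext m
      rw [opA_slEval_same]
      simp only [mergeStep, List.map_cons]
    rw [hfun]
    exact heq n

lemma killSector (lam : ℂ) (L : List (ℂ × ℂ[X])) :
    ∃ ops, ∀ n, applyOps ops (slEval lam L) n = 0 := by
  suffices h : ∀ (k : ℕ) (L : List (ℂ × ℂ[X])), L.length ≤ k →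
      ∃ ops, ∀ n, applyOps ops (slEval lam L) n = 0 from h L.length L le_rfl
  intro k
  induction k with
  | zero =>
    intro L hL
    have hnil : L = [] := List.length_eq_zero_iff.mp (Nat.le_zero.mp hL)
    subst hnil
    exact ⟨[], fun n => rfl⟩
  | succ k ih =>
    intro L hL
    match L with
    | [] => exact ⟨[], fun n => rfl⟩
    | x :: T =>
      obtain ⟨ops₁, L', hlen, heq⟩ := killHead lam x.2.natDegree x.1 x.2 T le_rfl
      obtain ⟨ops₂, h2⟩ := ih L' (by simp at hL ⊢; omega)
      refine ⟨ops₁ ++ ops₂, fun n => ?_⟩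
      rw [applyOps_append]
      have hfe : applyOps ops₁ (slEval lam (x :: T)) = slEval lam L' := funext heq
      rw [hfe]
      exact h2 n

lemma spread (ops : List (ℂ × ℂ)) (lam : ℂ) :
    ∀ L, ∃ L', ∀ n, applyOps ops (slEval lam L) n = slEval lam L' n := by
  induction ops with
  | nil => exact fun L => ⟨L, fun _ => rfl⟩
  | cons x xs ih =>
    intro L
    obtain ⟨L', h⟩ := ih (splitStep lam x.1 x.2 L)
    refine ⟨L', fun n => ?_⟩
    rw [applyOps_cons]
    have hfe : opA x.1 x.2 (slEval lam L) = slEval lam (splitStep lam x.1 x.2 L) :=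
      funext (opA_slEval_gen lam x.1 x.2 L)
    rw [hfe]
    exact h n

def sEval (S : List (ℂ × List (ℂ × ℂ[X]))) (n : ℕ) : ℂ :=
  (S.map fun x => slEval x.1 x.2 n).sum

lemma sEval_cons (x : ℂ × List (ℂ × ℂ[X])) (S : List (ℂ × List (ℂ × ℂ[X]))) (n : ℕ) :
    sEval (x :: S) n = slEval x.1 x.2 n + sEval S n := rfl

lemma spreadS (ops : List (ℂ × ℂ)) :
    ∀ S, ∃ S', S'.length = S.length ∧ ∀ n, applyOps ops (sEval S) n = sEval S' n := by
  intro S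
  induction S with
  | nil =>
    refine ⟨[], rfl, fun n => ?_⟩
    have h0 : sEval [] = fun _ => (0 : ℂ) := rfl
    rw [h0, applyOps_zero]
  | cons x S ih =>
    obtain ⟨S', hlen, h⟩ := ih
    obtain ⟨L', hL⟩ := spread ops x.1 x.2
    refine ⟨(x.1, L') :: S', by simp [hlen], fun n => ?_⟩
    have h1 : sEval (x :: S) = fun m => slEval x.1 x.2 m + sEval S m := rfl
    rw [h1, applyOps_add, hL n, h n, sEval_cons]

lemma killAll (S : List (ℂ × List (ℂ × ℂ[X]))) :
    ∃ ops, ∀ n, applyOps ops (sEval S) n = 0 := by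
  suffices h : ∀ (k : ℕ) S, S.length ≤ k → ∃ ops, ∀ n, applyOps ops (sEval S) n = 0 from
    h S.length S le_rfl
  intro k
  induction k with
  | zero =>
    intro S hS
    have hnil : S = [] := List.length_eq_zero_iff.mp (Nat.le_zero.mp hS)
    subst hnil
    exact ⟨[], fun n => rfl⟩
  | succ k ih =>
    intro S hS
    match S with
    | [] => exact ⟨[], fun n => rfl⟩
    | x :: T =>
      obtain ⟨ops₁, h1⟩ := killSector x.1 x.2
      obtain ⟨T', hlen, hT⟩ := spreadS ops₁ T
      obtain ⟨ops₂, h2⟩ := ih T' (by simp at hS ⊢; omega)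
      refine ⟨ops₁ ++ ops₂, fun n => ?_⟩
      rw [applyOps_append]
      have hfe : applyOps ops₁ (sEval (x :: T)) = sEval T' := by
        funext m
        have hc : sEval (x :: T) = fun r => slEval x.1 x.2 r + sEval T r := rfl
        rw [hc, applyOps_add, h1 m, hT m, zero_add]
      rw [hfe]
      exact h2 n

lemma IsGeomComb.congr {f g : ℕ → ℂ} (h : ∀ n, f n = g n) (hf : IsGeomComb f) :
    IsGeomComb g := by
  obtain ⟨L, hL⟩ := hf
  exact ⟨L, fun n => by rw [← h n, hL n]⟩

def actF (K : ℕ) (γ : ℕ → ℕ → ℂ) (f : ℕ → ℂ) (n : ℕ) : ℂ :=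
  f (n + K) - ∑ k ∈ Finset.range K, γ k n * f (n + k)

lemma expandOps (ops : List (ℂ × ℂ)) :
    ∃ γ : ℕ → ℕ → ℂ, (∀ k, IsGeomComb (γ k)) ∧
      ∀ f n, applyOps ops f n = actF ops.length γ f n := by
  induction ops with
  | nil =>
    refine ⟨fun _ _ => 0, fun _ => IsGeomComb.zero, fun f n => ?_⟩
    simp [actF, applyOps]
  | cons x xs ih =>
    obtain ⟨γ, hγ, h⟩ := ih
    set K := xs.length with hK
    set ρ := x.1
    set c := x.2
    refine ⟨fun k n => (if k = K then c * ρ ^ (n + K) else 0)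
      + (if k = 0 then 0 else γ (k - 1) n)
      - (if k = K then 0 else c * ρ ^ (n + k) * γ k n), ?_, ?_⟩
    · intro k
      by_cases h1 : k = K
      · subst h1
        by_cases h2 : K = 0
        · refine IsGeomComb.congr (fun n => ?_) ((IsGeomComb.geom c ρ).shift K)
          simp [h2]
        · refine IsGeomComb.congr (fun n => ?_)
            (((IsGeomComb.geom c ρ).shift K).add (hγ (K - 1)))
          simp [h2]
      · by_cases h2 : k = 0
        · refine IsGeomComb.congr (fun n => ?_) ((hγ k).geom_mul (-c * ρ ^ k) ρ)
          simp only [if_neg h1, if_pos h2, pow_add]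
          ring
        · refine IsGeomComb.congr (fun n => ?_)
            ((hγ (k - 1)).add ((hγ k).geom_mul (-c * ρ ^ k) ρ))
          simp only [if_neg h1, if_neg h2, pow_add]
          ring
    · intro f n
      rw [applyOps_cons, h (opA ρ c f) n]
      show opA ρ c f (n + K) - ∑ k ∈ Finset.range K, γ k n * opA ρ c f (n + k) = _
      have hexp : ∑ k ∈ Finset.range K, γ k n * opA ρ c f (n + k)
          = (∑ k ∈ Finset.range K, γ k n * f (n + k + 1))
            - ∑ k ∈ Finset.range K, γ k n * (c * ρ ^ (n + k) * f (n + k)) := by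
        rw [← Finset.sum_sub_distrib]
        apply Finset.sum_congr rfl
        intro k _
        simp only [opA]
        ring
      have key : ∑ k ∈ Finset.range (K + 1), ((if k = K then c * ρ ^ (n + K) else 0)
            + (if k = 0 then 0 else γ (k - 1) n)
            - (if k = K then 0 else c * ρ ^ (n + k) * γ k n)) * f (n + k)
          = c * ρ ^ (n + K) * f (n + K)
            + (∑ k ∈ Finset.range K, γ k n * f (n + k + 1))
            - ∑ k ∈ Finset.range K, γ k n * (c * ρ ^ (n + k) * f (n + k)) := by
        have step1 : ∀ k ∈ Finset.range (K + 1), ((if k = K then c * ρ ^ (n + K) else 0)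
            + (if k = 0 then 0 else γ (k - 1) n)
            - (if k = K then 0 else c * ρ ^ (n + k) * γ k n)) * f (n + k)
            = (if k = K then c * ρ ^ (n + K) * f (n + K) else 0)
              + (if k = 0 then 0 else γ (k - 1) n * f (n + k))
              - (if k = K then 0 else γ k n * (c * ρ ^ (n + k) * f (n + k))) := by
          intro k _
          by_cases hh1 : k = K
          · subst hh1
            by_cases hh2 : K = 0 <;> simp [hh2] <;> ring
          · by_cases hh2 : k = 0
            · subst hh2
              simp [if_neg hh1]
              ring
            · simp [if_neg hh1, if_neg hh2]
              ring
        rw [Finset.sum_congr rfl step1, Finset.sum_sub_distrib, Finset.sum_add_distrib]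
        congr 1
        · congr 1
          · rw [Finset.sum_ite_eq' (Finset.range (K + 1)) K
              (fun k => c * ρ ^ (n + K) * f (n + K))]
            simp
          · rw [Finset.sum_range_succ']
            simp only [Nat.add_eq_zero, one_ne_zero, and_false, ite_false, reduceIte,
              Nat.add_sub_cancel, if_pos rfl, add_zero]
            exact Finset.sum_congr rfl fun k _ => rfl
        · rw [Finset.sum_range_succ, if_pos rfl, add_zero]
          apply Finset.sum_congr rfl
          intro k hk
          rw [if_neg (by simp at hk; omega)]
      show _ = f (n + (K + 1)) - ∑ k ∈ Finset.range (K + 1), _ * f (n + k)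
      rw [key, hexp]
      simp only [opA]
      have hn1 : n + K + 1 = n + (K + 1) := by omega
      rw [hn1]
      ring

lemma isCFinite_const (x : ℂ) : IsCFinite (fun _ : ℕ => x) :=
  geomComb_isCFinite (IsGeomComb.const x)

lemma window (K : ℕ) (γ : ℕ → ℕ → ℂ) (f g : ℕ → ℂ) (n : ℕ)
    (h : ∀ m, n ≤ m → m ≤ n + K → f m = g m) : actF K γ f n = actF K γ g n := by
  unfold actF
  rw [h (n + K) (by omega) le_rfl]
  congr 1
  apply Finset.sum_congr rfl
  intro k hk
  rw [h (n + k) (by omega) (by simp at hk; omega)]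

lemma sEval_of_ep (L : List (ℂ × ℂ[X])) (n : ℕ) :
    sEval (L.map fun q => (q.1, [(1, q.2.comp (X ^ 2))])) n = epEval L (n ^ 2) := by
  induction L with
  | nil => rfl
  | cons x t ih =>
    simp only [List.map_cons]
    rw [sEval_cons, epEval_cons, ih]
    congr 1
    rw [slEval_cons, slEval_nil, add_zero, eval_comp]
    simp only [eval_pow, eval_X, one_pow, mul_one]
    push_cast
    ring

end C2Aux

open C2Aux in
theorem c2finite_square_subseq (a : ℕ → ℂ) (ha : IsCFinite a) :
    IsC2Finite (fun n => a (n ^ 2)) := by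
  classical
  obtain ⟨s₀, c₀, hrec⟩ := ha
  set Q : ℂ[X] := ∑ i : Fin s₀, C (c₀ i) * X ^ (i : ℕ) with hQdef
  set P : ℂ[X] := X ^ s₀ - Q with hPdef
  have hQdeg : Q.degree < (s₀ : WithBot ℕ) ∨ s₀ = 0 := by
    rcases Nat.eq_zero_or_pos s₀ with h0 | hpos
    · right; exact h0
    · left
      refine lt_of_le_of_lt (Polynomial.degree_sum_le _ _) ?_
      rw [Finset.sup_lt_iff (by exact_mod_cast WithBot.bot_lt_coe s₀)]
      intro i _
      refine lt_of_le_of_lt (degree_C_mul_X_pow_le _ _) ?_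
      exact_mod_cast i.2
  have hs0 : s₀ = 0 → (Q = 0 ∧ P = 1) := by
    intro h0
    have hq : Q = 0 := by rw [hQdef]; subst h0; simp
    refine ⟨hq, ?_⟩
    rw [hPdef, hq, h0]
    simp
  have hPdeg : P.degree = (s₀ : WithBot ℕ) := by
    rcases hQdeg with hlt | h0
    · rw [hPdef]
      rw [degree_sub_eq_left_of_degree_lt (by rwa [degree_X_pow]), degree_X_pow]
    · obtain ⟨_, hp1⟩ := hs0 h0
      rw [hp1, h0]
      simp [degree_one]
  have hPd : P.natDegree = s₀ := natDegree_eq_of_degree_eq_some hPdeg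
  have hPm : P.Monic := by
    rcases hQdeg with hlt | h0
    · unfold Polynomial.Monic
      rw [Polynomial.leadingCoeff, hPd, hPdef, coeff_sub, coeff_X_pow, if_pos rfl,
        coeff_eq_zero_of_degree_lt hlt, sub_zero]
    · obtain ⟨_, hp1⟩ := hs0 h0
      rw [hp1]; exact monic_one
  have hPa : ∀ n, s₀ ≤ n → (Polynomial.aeval shiftE P) a n = 0 := by
    intro n hn
    rw [hPdef, map_sub, map_pow, aeval_X, map_sum]
    have hsum : ∀ i : Fin s₀,
        (Polynomial.aeval shiftE (C (c₀ i) * X ^ (i : ℕ))) a = c₀ i • ((shiftE ^ (i : ℕ)) a) := by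
      intro i
      rw [map_mul, aeval_C, map_pow, aeval_X, Module.End.mul_apply,
        Module.algebraMap_end_apply]
    rw [LinearMap.sub_apply, LinearMap.sum_apply]
    rw [Pi.sub_apply, Finset.sum_apply]
    rw [shiftE_pow]
    have : ∀ i : Fin s₀, ((Polynomial.aeval shiftE) (C (c₀ i) * X ^ (i : ℕ)) a) n
        = c₀ i * a (n + (i : ℕ)) := by
      intro i
      rw [hsum i]
      show c₀ i * ((shiftE ^ (i : ℕ)) a n) = _
      rw [shiftE_pow]
    rw [Finset.sum_congr rfl fun i _ => this i, hrec n hn]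
    ring
  obtain ⟨L, N', hLnz, hLrep⟩ := expPolyRep s₀ P hPm hPd a s₀ hPa
  set S : List (ℂ × List (ℂ × ℂ[X])) := L.map fun q => (q.1, [(1, q.2.comp (X ^ 2))]) with hS
  set b : ℕ → ℂ := fun n => a (n ^ 2) with hb
  have hbS : ∀ n, N' ≤ n → b n = sEval S n := by
    intro n hn
    rw [hS, sEval_of_ep, hb]
    exact hLrep (n ^ 2) (le_trans hn (Nat.le_self_pow two_ne_zero n))
  obtain ⟨ops, hops⟩ := killAll S
  obtain ⟨γ, hγ, hact⟩ := expandOps ops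
  set K := ops.length with hK
  have key : ∀ m, N' ≤ m → b (m + K) = ∑ k ∈ Finset.range K, γ k m * b (m + k) := by
    intro m hm
    have h1 : actF K γ b m = actF K γ (sEval S) m :=
      window K γ b (sEval S) m (fun m' hm1 _ => hbS m' (by omega))
    have h2 : actF K γ (sEval S) m = 0 := by
      rw [← hact (sEval S) m]
      exact hops m
    have h3 : actF K γ b m = 0 := h1.trans h2
    unfold actF at h3
    linear_combination h3
  set T := N' with hT
  refine ⟨T + K, fun j n => if (j : ℕ) = T + K then 1
    else if (j : ℕ) < T then 0 else γ ((j : ℕ) - T) (n + T), ?_, ?_, ?_⟩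
  · intro i
    dsimp only
    by_cases h1 : (i : ℕ) = T + K
    · have : (fun n => if (i : ℕ) = T + K then (1:ℂ)
          else if (i : ℕ) < T then 0 else γ ((i : ℕ) - T) (n + T)) = fun _ => (1:ℂ) := by
        funext n; rw [if_pos h1]
      rw [this]
      exact isCFinite_const 1
    · by_cases h2 : (i : ℕ) < T
      · have : (fun n => if (i : ℕ) = T + K then (1:ℂ)
            else if (i : ℕ) < T then 0 else γ ((i : ℕ) - T) (n + T)) = fun _ => (0:ℂ) := by
          funext n; rw [if_neg h1, if_pos h2]
        rw [this]
        exact isCFinite_const 0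
      · have : (fun n => if (i : ℕ) = T + K then (1:ℂ)
            else if (i : ℕ) < T then 0 else γ ((i : ℕ) - T) (n + T))
            = fun n => γ ((i : ℕ) - T) (n + T) := by
          funext n; rw [if_neg h1, if_neg h2]
        rw [this]
        exact geomComb_isCFinite ((hγ ((i : ℕ) - T)).shift T)
  · intro n
    simp only [Fin.val_last, if_pos rfl]
    exact one_ne_zero
  · intro n hn
    have harg : n + (T + K) = (n + T) + K := by omega
    have hkey := key (n + T) (by omega)
    simp only [Fin.val_last, eq_self_iff_true, if_true, one_mul]
    rw [show b (n + (T + K)) = b ((n + T) + K) from by rw [harg], hkey]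
    have hsum : ∀ i : Fin (T + K),
        (if ((i.castSucc : Fin (T + K + 1)) : ℕ) = T + K then (1:ℂ)
          else if ((i.castSucc : Fin (T + K + 1)) : ℕ) < T then 0
          else γ (((i.castSucc : Fin (T + K + 1)) : ℕ) - T) (n + T)) * b (n + (i : ℕ))
        = (if (i : ℕ) < T then 0 else γ ((i : ℕ) - T) (n + T) * b (n + (i : ℕ))) := by
      intro i
      rw [Fin.coe_castSucc, if_neg (by omega)]
      by_cases h2 : (i : ℕ) < T
      · rw [if_pos h2, if_pos h2, zero_mul]
      · rw [if_neg h2, if_neg h2]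
    rw [Finset.sum_congr rfl fun i _ => hsum i]
    rw [Fin.sum_univ_eq_sum_range (fun j => if j < T then 0 else γ (j - T) (n + T) * b (n + j)) (T + K)]
    rw [Finset.sum_range_add (fun j => if j < T then 0 else γ (j - T) (n + T) * b (n + j)) T K]
    have hfirst : ∑ j ∈ Finset.range T, (if j < T then 0 else γ (j - T) (n + T) * b (n + j)) = 0 := by
      apply Finset.sum_eq_zero
      intro j hj
      rw [if_pos (by simp at hj; omega)]
    rw [hfirst, zero_add]
    apply Finset.sum_congr rfl
    intro k hk
    rw [if_neg (by omega)]
    congr 2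
    · omega
    · omega
end
end

section
/- The sum of two C²-finite sequences over ℂ is C²-finite. -/
open Filter

noncomputable section

abbrev G := Filter.Germ (Filter.atTop : Filter ℕ) ℂ

lemma tendsto_succ : Tendsto (fun n : ℕ => n + 1) atTop atTop := tendsto_add_atTop_nat 1

def E (g : G) : G := g.compTendsto (fun n : ℕ => n + 1) tendsto_succ

@[simp] lemma E_coe (f : ℕ → ℂ) : E (↑f : G) = ↑(fun n => f (n + 1)) := rfl

lemma E_add (x y : G) : E (x + y) = E x + E y := by
  induction x using Filter.Germ.inductionOn
  induction y using Filter.Germ.inductionOn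
  rfl

lemma E_mul (x y : G) : E (x * y) = E x * E y := by
  induction x using Filter.Germ.inductionOn
  induction y using Filter.Germ.inductionOn
  rfl

lemma E_one : E (1 : G) = 1 := rfl
lemma E_zero : E (0 : G) = 0 := rfl

lemma E_smul (c : ℂ) (x : G) : E (c • x) = c • E x := by
  induction x using Filter.Germ.inductionOn
  rfl

lemma E_iter_coe (f : ℕ → ℂ) (k : ℕ) : E^[k] (↑f : G) = ↑(fun n => f (n + k)) := by
  induction k with
  | zero => simp
  | succ m ih =>
    rw [Function.iterate_succ_apply', ih, E_coe]
    congr 1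
    funext n
    congr 1
    omega

instance instAlgG : Algebra ℂ G where
  algebraMap := (Filter.Germ.coeRingHom _).comp (Pi.constRingHom ℕ ℂ)
  commutes' := fun c x => by
    induction x using Filter.Germ.inductionOn
    exact congrArg _ (funext fun n => mul_comm _ _)
  smul_def' := fun c x => by
    induction x using Filter.Germ.inductionOn
    rfl

lemma germ_sum {ι : Type*} (s : Finset ι) (f : ι → ℕ → ℂ) :
    ((↑(fun n => ∑ i ∈ s, f i n) : G)) = ∑ i ∈ s, (↑(f i) : G) := by
  classical
  induction s using Finset.induction with
  | empty => simp; rfl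
  | insert _ _ h ih =>
    rw [Finset.sum_insert h, ← ih]
    simp only [Finset.sum_insert h]
    rfl

lemma E_iterate_mem {V : Submodule ℂ G} (hV : ∀ x ∈ V, E x ∈ V) {g : G} (hg : g ∈ V) (k : ℕ) :
    E^[k] g ∈ V := by
  induction k with
  | zero => exact hg
  | succ m ih => rw [Function.iterate_succ_apply']; exact hV _ ih

/-- C-finite germs: contained in a finitely generated shift-stable submodule. -/
def IsCFG (g : G) : Prop := ∃ V : Submodule ℂ G, V.FG ∧ g ∈ V ∧ ∀ x ∈ V, E x ∈ V

lemma isCFG_one : IsCFG 1 := by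
  refine ⟨Submodule.span ℂ {1}, Submodule.fg_span_singleton 1, Submodule.mem_span_singleton_self 1, ?_⟩
  intro x hx
  rw [Submodule.mem_span_singleton] at hx ⊢
  obtain ⟨c, rfl⟩ := hx
  exact ⟨c, by rw [E_smul, E_one]⟩

lemma isCFG_algebraMap (c : ℂ) : IsCFG (algebraMap ℂ G c) := by
  obtain ⟨V, h1, h2, h3⟩ := isCFG_one
  exact ⟨V, h1, by simpa [Algebra.algebraMap_eq_smul_one] using V.smul_mem c h2, h3⟩

lemma isCFG_add {x y : G} (hx : IsCFG x) (hy : IsCFG y) : IsCFG (x + y) := by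
  obtain ⟨V, hV1, hV2, hV3⟩ := hx
  obtain ⟨W, hW1, hW2, hW3⟩ := hy
  refine ⟨V ⊔ W, hV1.sup hW1, Submodule.add_mem_sup hV2 hW2, ?_⟩
  intro z hz
  rw [Submodule.mem_sup] at hz ⊢
  obtain ⟨a, ha, b, hb, rfl⟩ := hz
  exact ⟨E a, hV3 a ha, E b, hW3 b hb, (E_add a b).symm⟩

lemma isCFG_mul {x y : G} (hx : IsCFG x) (hy : IsCFG y) : IsCFG (x * y) := by
  obtain ⟨V, hV1, hV2, hV3⟩ := hx
  obtain ⟨W, hW1, hW2, hW3⟩ := hy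
  refine ⟨V * W, hV1.mul hW1, Submodule.mul_mem_mul hV2 hW2, ?_⟩
  intro z hz
  refine Submodule.mul_induction_on hz ?_ ?_
  · intro a ha b hb
    rw [E_mul]
    exact Submodule.mul_mem_mul (hV3 a ha) (hW3 b hb)
  · intro a b ha hb
    rw [E_add]
    exact add_mem ha hb

lemma isCFG_E {x : G} (hx : IsCFG x) : IsCFG (E x) := by
  obtain ⟨V, h1, h2, h3⟩ := hx
  exact ⟨V, h1, h3 x h2, h3⟩

def CFA : Subalgebra ℂ G where
  carrier := {g | IsCFG g}
  add_mem' := isCFG_add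
  mul_mem' := isCFG_mul
  algebraMap_mem' := isCFG_algebraMap


lemma isCFinite_of_eventual (x : ℕ → ℂ) (r N : ℕ) (e : Fin r → ℂ)
    (h : ∀ n, N ≤ n → x (n + r) = ∑ i : Fin r, e i * x (n + (i : ℕ))) : IsCFinite x := by
  induction N generalizing r e with
  | zero => exact ⟨r, e, fun n _ => h n (Nat.zero_le n)⟩
  | succ N ih =>
    apply ih (r + 1) (Fin.cases 0 e)
    intro n hn
    have h1 := h (n + 1) (by omega)
    rw [Fin.sum_univ_succ]
    simp only [Fin.cases_zero, Fin.cases_succ, zero_mul, zero_add, Fin.val_zero]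
    have h2 : x (n + (r + 1)) = x (n + 1 + r) := by congr 1; omega
    rw [h2, h1]
    apply Finset.sum_congr rfl
    intro i _
    congr 2
    simp [Fin.val_succ]
    omega

lemma germ_CFA_of_isCFinite {x : ℕ → ℂ} (hx : IsCFinite x) : (↑x : G) ∈ CFA := by
  obtain ⟨r, e, h⟩ := hx
  rcases Nat.eq_zero_or_pos r with hr | hr
  · subst hr
    have hx0 : x = fun _ => (0 : ℂ) := by
      funext n
      simpa using h n (Nat.zero_le n)
    rw [hx0]
    exact (CFA : Subalgebra ℂ G).zero_mem
  · refine ⟨Submodule.span ℂ (Set.range (fun i : Fin r => E^[(i : ℕ)] (↑x : G))),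
      Submodule.fg_span (Set.finite_range _), ?_, ?_⟩
    · exact Submodule.subset_span ⟨⟨0, hr⟩, rfl⟩
    · intro z hz
      induction hz using Submodule.span_induction with
      | mem y hy =>
        obtain ⟨i, rfl⟩ := hy
        simp only []
        rcases Nat.lt_or_ge ((i : ℕ) + 1) r with h' | h'
        · show E (E^[(i:ℕ)] (↑x : G)) ∈ _
          rw [(Function.iterate_succ_apply' E (i:ℕ) (↑x : G)).symm]
          exact Submodule.subset_span ⟨⟨(i : ℕ) + 1, h'⟩, rfl⟩
        · have hir : (i : ℕ) + 1 = r := by omega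
          show E (E^[(i:ℕ)] (↑x : G)) ∈ _
          rw [(Function.iterate_succ_apply' E (i:ℕ) (↑x : G)).symm]
          rw [show (i:ℕ).succ = r by omega]
          have key : E^[r] (↑x : G) = ∑ j : Fin r, e j • E^[(j : ℕ)] (↑x : G) := by
            rw [E_iter_coe]
            have : (↑(fun n => x (n + r)) : G) = ↑(fun n => ∑ j : Fin r, e j * x (n + (j : ℕ))) := by
              apply Filter.Germ.coe_eq.mpr
              filter_upwards [eventually_ge_atTop r] with n hn
              exact h n hn
            rw [this, germ_sum]
            apply Finset.sum_congr rfl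
            intro j _
            rw [E_iter_coe]
            rfl
          rw [key]
          exact Submodule.sum_mem _ fun j _ =>
            Submodule.smul_mem _ _ (Submodule.subset_span ⟨j, rfl⟩)
      | zero => rw [E_zero]; exact Submodule.zero_mem _
      | add a b _ _ ha hb => rw [E_add]; exact Submodule.add_mem _ ha hb
      | smul c a _ ha => rw [E_smul]; exact Submodule.smul_mem _ _ ha

lemma germ_rec_of_CFA {g : G} (h : g ∈ CFA) :
    ∃ (r : ℕ) (e : Fin r → ℂ), E^[r] g = ∑ i : Fin r, e i • E^[(i : ℕ)] g := by
  obtain ⟨V, hFG, hx, hstab⟩ := h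
  have hst : ∀ k, E^[k] g ∈ V := E_iterate_mem hstab hx
  haveI : IsNoetherian ℂ ↥V := isNoetherian_of_fg_of_noetherian V hFG
  have mono : Monotone (fun k => Submodule.comap V.subtype
      (Submodule.span ℂ (Set.range (fun i : Fin k => E^[(i : ℕ)] g)))) := by
    intro k k' hk
    apply Submodule.comap_mono
    apply Submodule.span_mono
    rintro _ ⟨i, rfl⟩
    exact ⟨⟨i, lt_of_lt_of_le i.isLt hk⟩, rfl⟩
  obtain ⟨r, hr⟩ := monotone_stabilizes_iff_noetherian.mpr inferInstance ⟨_, mono⟩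
  have h1 : (⟨E^[r] g, hst r⟩ : ↥V) ∈ Submodule.comap V.subtype
      (Submodule.span ℂ (Set.range (fun i : Fin (r + 1) => E^[(i : ℕ)] g))) := by
    simp only [Submodule.mem_comap]
    exact Submodule.subset_span ⟨⟨r, Nat.lt_succ_self r⟩, rfl⟩
  have h2 := hr (r + 1) (Nat.le_succ r)
  simp only [OrderHom.coe_mk] at h2
  rw [← h2] at h1
  simp only [Submodule.mem_comap] at h1
  rw [Submodule.mem_span_range_iff_exists_fun] at h1
  obtain ⟨e, he⟩ := h1
  exact ⟨r, e, he.symm⟩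

lemma isCFinite_of_germ_CFA {x : ℕ → ℂ} (h : (↑x : G) ∈ CFA) : IsCFinite x := by
  obtain ⟨r, e, he⟩ := germ_rec_of_CFA h
  have : (↑(fun n => x (n + r)) : G) = ↑(fun n => ∑ i : Fin r, e i * x (n + (i : ℕ))) := by
    rw [← E_iter_coe, he, germ_sum]
    apply Finset.sum_congr rfl
    intro j _
    rw [E_iter_coe]
    rfl
  have hev := Filter.Germ.coe_eq.mp this
  rw [Filter.EventuallyEq, eventually_atTop] at hev
  obtain ⟨N, hN⟩ := hev
  exact isCFinite_of_eventual x r N e hN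

lemma isCFinite_iff_germ {x : ℕ → ℂ} : IsCFinite x ↔ (↑x : G) ∈ CFA :=
  ⟨germ_CFA_of_isCFinite, isCFinite_of_germ_CFA⟩

lemma E_sum {ι : Type*} (t : Finset ι) (f : ι → G) :
    E (∑ i ∈ t, f i) = ∑ i ∈ t, E (f i) := by
  classical
  induction t using Finset.induction with
  | empty => simpa using E_zero
  | insert _ _ h ih => rw [Finset.sum_insert h, Finset.sum_insert h, E_add, ih]

lemma E_iter_sum (m : ℕ) {ι : Type*} (t : Finset ι) (f : ι → G) :
    E^[m] (∑ i ∈ t, f i) = ∑ i ∈ t, E^[m] (f i) := by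
  induction m generalizing f with
  | zero => simp
  | succ p ih =>
    rw [Function.iterate_succ_apply]
    rw [E_sum]
    exact ih (fun i => E (f i))

lemma E_iter_mul (m : ℕ) (x y : G) : E^[m] (x * y) = E^[m] x * E^[m] y := by
  induction m generalizing x y with
  | zero => simp
  | succ p ih =>
    simp only [Function.iterate_succ_apply, E_mul]
    exact ih (E x) (E y)

def Avec {R : Type*} [CommRing R] (s : ℕ) (ec : Fin s → ℕ → R) : ℕ → Fin s → R
  | k =>
    if h : k < s then (fun i => if (i : ℕ) = k then 1 else 0)
    else fun i => ∑ i' : Fin s, ec i' (k - s) * Avec s ec (k - s + (i' : ℕ)) i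
  termination_by k => k
  decreasing_by
    simp only [not_lt] at h
    have := i'.isLt
    omega

lemma Avec_expand (s : ℕ) (c : Fin s → G) (u₀ : G)
    (hu : E^[s] u₀ = ∑ i : Fin s, c i * E^[(i : ℕ)] u₀) (k : ℕ) :
    E^[k] u₀ = ∑ i : Fin s, Avec s (fun i m => E^[m] (c i)) k i * E^[(i : ℕ)] u₀ := by
  induction k using Nat.strong_induction_on with
  | _ k ih =>
    rcases Nat.lt_or_ge k s with h | h
    · rw [Avec, dif_pos h]
      have : ∀ i : Fin s,
          (if (i : ℕ) = k then (1 : G) else 0) * E^[(i : ℕ)] u₀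
            = if i = ⟨k, h⟩ then E^[(i : ℕ)] u₀ else 0 := by
        intro i
        by_cases hik : i = ⟨k, h⟩
        · subst hik; simp
        · have : ¬ ((i : ℕ) = k) := by
            intro hc; exact hik (Fin.ext hc)
          rw [if_neg this, if_neg hik, zero_mul]
      rw [Finset.sum_congr rfl (fun i _ => this i)]
      simp
    · have h1 : E^[k] u₀ = E^[k - s] (E^[s] u₀) := by
        rw [← Function.iterate_add_apply]
        congr 1
        omega
      rw [h1, hu, E_iter_sum]
      have h2 : ∀ i' : Fin s, E^[k - s] (c i' * E^[(i' : ℕ)] u₀)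
          = E^[k - s] (c i') * E^[k - s + (i' : ℕ)] u₀ := by
        intro i'
        rw [E_iter_mul, Function.iterate_add_apply]
      rw [Finset.sum_congr rfl (fun i' _ => h2 i')]
      calc ∑ i' : Fin s, E^[k - s] (c i') * E^[k - s + (i' : ℕ)] u₀
          = ∑ i' : Fin s, E^[k - s] (c i') *
              ∑ i : Fin s, Avec s (fun i m => E^[m] (c i)) (k - s + (i' : ℕ)) i * E^[(i : ℕ)] u₀ := by
            apply Finset.sum_congr rfl
            intro i' _
            rw [ih (k - s + (i' : ℕ)) (by have := i'.isLt; omega)]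
        _ = ∑ i : Fin s, (∑ i' : Fin s,
              E^[k - s] (c i') * Avec s (fun i m => E^[m] (c i)) (k - s + (i' : ℕ)) i)
                * E^[(i : ℕ)] u₀ := by
            simp_rw [Finset.mul_sum, Finset.sum_mul, mul_assoc]
            rw [Finset.sum_comm]
        _ = ∑ i : Fin s, Avec s (fun i m => E^[m] (c i)) k i * E^[(i : ℕ)] u₀ := by
            apply Finset.sum_congr rfl
            intro i _
            congr 1
            rw [Avec, dif_neg (by omega)]

lemma Avec_mem (R₀ : Subalgebra ℂ G) (hE : ∀ g ∈ R₀, E g ∈ R₀) (s : ℕ) (c : Fin s → G)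
    (hc : ∀ i, c i ∈ R₀) (k : ℕ) (i : Fin s) :
    Avec s (fun i m => E^[m] (c i)) k i ∈ R₀ := by
  have hEm : ∀ (m : ℕ) (g : G), g ∈ R₀ → E^[m] g ∈ R₀ := by
    intro m
    induction m with
    | zero => exact fun g hg => hg
    | succ p ih => intro g hg; rw [Function.iterate_succ_apply']; exact hE _ (ih g hg)
  induction k using Nat.strong_induction_on generalizing i with
  | _ k ihk =>
    rcases Nat.lt_or_ge k s with h | h
    · rw [Avec, dif_pos h]
      by_cases hik : (i : ℕ) = k
      · rw [if_pos hik]; exact R₀.one_mem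
      · rw [if_neg hik]; exact R₀.zero_mem
    · rw [Avec, dif_neg (by omega)]
      apply Subalgebra.sum_mem
      intro i' _
      exact R₀.mul_mem (hEm _ _ (hc i')) (ihk _ (by have := i'.isLt; omega) i)

lemma germ_prod {ι : Type*} (s : Finset ι) (f : ι → ℕ → ℂ) :
    ((↑(fun n => ∏ i ∈ s, f i n) : G)) = ∏ i ∈ s, (↑(f i) : G) := by
  classical
  induction s using Finset.induction with
  | empty => simp; rfl
  | insert _ _ h ih =>
    rw [Finset.prod_insert h, ← ih]
    simp only [Finset.prod_insert h]
    rfl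

lemma E_iter_add (m : ℕ) (x y : G) : E^[m] (x + y) = E^[m] x + E^[m] y := by
  induction m generalizing x y with
  | zero => simp
  | succ p ih =>
    simp only [Function.iterate_succ_apply, E_add]
    exact ih (E x) (E y)

lemma isCFinite_zero : IsCFinite (fun _ => (0 : ℂ)) :=
  ⟨0, Fin.elim0, fun n _ => by simp⟩

/-- the τ sequence -/
def tauSeq (s t : ℕ) (cs ct : ℕ → ℂ) : ℕ → ℂ := fun m =>
  (if s ≤ m + 1 then cs (m + 1 - s) else 1) * (if t ≤ m + 1 then ct (m + 1 - t) else 1)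

lemma tauSeq_comm (s t : ℕ) (cs ct : ℕ → ℂ) : tauSeq t s ct cs = tauSeq s t cs ct :=
  funext fun m => mul_comm _ _

lemma tauSeq_ne_zero (s t : ℕ) (cs ct : ℕ → ℂ) (hcs : ∀ n, cs n ≠ 0) (hct : ∀ n, ct n ≠ 0)
    (m : ℕ) : tauSeq s t cs ct m ≠ 0 := by
  unfold tauSeq
  apply mul_ne_zero <;> (split <;> simp [hcs, hct])

/-- the rescaling factor T -/
def TT (s t : ℕ) (cs ct : ℕ → ℂ) : ℕ → ℂ := fun n => ∏ m ∈ Finset.range n, tauSeq s t cs ct m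

lemma TT_comm (s t : ℕ) (cs ct : ℕ → ℂ) : TT t s ct cs = TT s t cs ct := by
  unfold TT; rw [tauSeq_comm]

lemma TT_ne_zero (s t : ℕ) (cs ct : ℕ → ℂ) (hcs : ∀ n, cs n ≠ 0) (hct : ∀ n, ct n ≠ 0)
    (n : ℕ) : TT s t cs ct n ≠ 0 :=
  Finset.prod_ne_zero_iff.mpr fun m _ => tauSeq_ne_zero s t cs ct hcs hct m

lemma TT_add (s t : ℕ) (cs ct : ℕ → ℂ) (n k : ℕ) :
    TT s t cs ct (n + k) = TT s t cs ct n * ∏ j ∈ Finset.range k, tauSeq s t cs ct (n + j) :=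
  Finset.prod_range_add _ n k

/-- backshifted sequence in τ is C-finite -/
lemma isCFinite_backshift (c : ℕ → ℂ) (hc : IsCFinite c) (s : ℕ) :
    IsCFinite (fun m => if s ≤ m + 1 then c (m + 1 - s) else 1) := by
  obtain ⟨r, e, hr⟩ := hc
  apply isCFinite_of_eventual _ r (s + r) e
  intro m hm
  have h1 : (if s ≤ m + r + 1 then c (m + r + 1 - s) else 1) = c ((m + 1 - s) + r) := by
    rw [if_pos (by omega)]
    congr 1
    omega
  show (if s ≤ m + r + 1 then c (m + r + 1 - s) else 1)
      = ∑ i : Fin r, e i * (if s ≤ m + (i : ℕ) + 1 then c (m + (i : ℕ) + 1 - s) else 1)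
  rw [h1, hr (m + 1 - s) (by omega)]
  apply Finset.sum_congr rfl
  intro i _
  congr 1
  rw [if_pos (by omega)]
  congr 1
  omega

lemma isCFinite_tauSeq (s t : ℕ) (cs ct : ℕ → ℂ) (hcs : IsCFinite cs) (hct : IsCFinite ct) :
    IsCFinite (tauSeq s t cs ct) := by
  rw [isCFinite_iff_germ]
  have h1 := germ_CFA_of_isCFinite (isCFinite_backshift cs hcs s)
  have h2 := germ_CFA_of_isCFinite (isCFinite_backshift ct hct t)
  have : (↑(tauSeq s t cs ct) : G)
      = (↑(fun m => if s ≤ m + 1 then cs (m + 1 - s) else 1) : G)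
        * (↑(fun m => if t ≤ m + 1 then ct (m + 1 - t) else 1) : G) := rfl
  rw [this]
  exact CFA.mul_mem h1 h2

/-- monic coefficients for the rescaled sequence -/
def chat (s t : ℕ) (ca : Fin (s + 1) → ℕ → ℂ) (ct : ℕ → ℂ) (i : Fin s) : ℕ → ℂ := fun n =>
  ca i.castSucc n * (if t ≤ n + (s - 1) + 1 then ct (n + (s - 1) + 1 - t) else 1)
    * ∏ j ∈ Finset.range (s - 1 - (i : ℕ)), tauSeq s t (ca (Fin.last s)) ct (n + (i : ℕ) + j)

lemma TT_key (s t : ℕ) (hs : 1 ≤ s) (cs ct : ℕ → ℂ) (n : ℕ) (i : ℕ) (hi : i < s) :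
    TT s t cs ct (n + s) = cs n * (if t ≤ n + (s - 1) + 1 then ct (n + (s - 1) + 1 - t) else 1)
      * (∏ j ∈ Finset.range (s - 1 - i), tauSeq s t cs ct (n + i + j)) * TT s t cs ct (n + i) := by
  have h1 : n + s = (n + i) + (s - i) := by omega
  rw [h1, TT_add]
  have h2 : s - i = (s - 1 - i) + 1 := by omega
  rw [h2, Finset.prod_range_succ]
  have h3 : n + i + (s - 1 - i) = n + (s - 1) := by omega
  rw [h3]
  have h4 : tauSeq s t cs ct (n + (s - 1))
      = cs n * (if t ≤ n + (s - 1) + 1 then ct (n + (s - 1) + 1 - t) else 1) := by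
    unfold tauSeq
    rw [if_pos (by omega)]
    congr 2
    omega
  rw [h4]
  ring

lemma monic_rec (s t : ℕ) (hs : 1 ≤ s) (ca : Fin (s + 1) → ℕ → ℂ) (ct : ℕ → ℂ)
    (a : ℕ → ℂ)
    (hNZ : ∀ n, ca (Fin.last s) n ≠ 0)
    (hrec : ∀ n, s ≤ n →
      ca (Fin.last s) n * a (n + s) = ∑ i : Fin s, ca i.castSucc n * a (n + (i : ℕ)))
    (n : ℕ) (hn : s ≤ n) :
    TT s t (ca (Fin.last s)) ct (n + s) * a (n + s)
      = ∑ i : Fin s, chat s t ca ct i n * (TT s t (ca (Fin.last s)) ct (n + (i : ℕ)) * a (n + (i : ℕ))) := by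
  apply mul_left_cancel₀ (hNZ n)
  rw [Finset.mul_sum]
  have lhs : ca (Fin.last s) n * (TT s t (ca (Fin.last s)) ct (n + s) * a (n + s))
      = TT s t (ca (Fin.last s)) ct (n + s) * (ca (Fin.last s) n * a (n + s)) := by ring
  rw [lhs, hrec n hn, Finset.mul_sum]
  apply Finset.sum_congr rfl
  intro i _
  rw [TT_key s t hs (ca (Fin.last s)) ct n (i : ℕ) i.isLt]
  unfold chat
  ring

lemma CFA_E_iter_mem {g : G} (m : ℕ) (hg : g ∈ CFA) : E^[m] g ∈ CFA := by
  induction m with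
  | zero => exact hg
  | succ p ih => rw [Function.iterate_succ_apply']; exact isCFG_E ih

lemma chat_CFA (s t : ℕ) (ca : Fin (s + 1) → ℕ → ℂ) (ct : ℕ → ℂ)
    (hca : ∀ i, IsCFinite (ca i)) (hct : IsCFinite ct) (i : Fin s) :
    IsCFinite (chat s t ca ct i) := by
  rw [isCFinite_iff_germ]
  have h1 : (↑(chat s t ca ct i) : G)
      = (↑(ca i.castSucc) : G)
        * (↑(fun n => if t ≤ n + (s - 1) + 1 then ct (n + (s - 1) + 1 - t) else 1) : G)
        * (↑(fun n => ∏ j ∈ Finset.range (s - 1 - (i : ℕ)),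
            tauSeq s t (ca (Fin.last s)) ct (n + (i : ℕ) + j)) : G) := rfl
  rw [h1]
  apply CFA.mul_mem
  apply CFA.mul_mem
  · exact germ_CFA_of_isCFinite (hca _)
  · have h2 : (↑(fun n => if t ≤ n + (s - 1) + 1 then ct (n + (s - 1) + 1 - t) else 1) : G)
        = E^[s - 1] (↑(fun m => if t ≤ m + 1 then ct (m + 1 - t) else 1) : G) := by
      rw [E_iter_coe]
    rw [h2]
    exact CFA_E_iter_mem _ (germ_CFA_of_isCFinite (isCFinite_backshift ct hct t))
  · have h3 : (↑(fun n => ∏ j ∈ Finset.range (s - 1 - (i : ℕ)),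
        tauSeq s t (ca (Fin.last s)) ct (n + (i : ℕ) + j)) : G)
        = ∏ j ∈ Finset.range (s - 1 - (i : ℕ)),
            E^[(i : ℕ) + j] (↑(tauSeq s t (ca (Fin.last s)) ct) : G) := by
      rw [germ_prod]
      apply Finset.prod_congr rfl
      intro j _
      rw [E_iter_coe]
      congr 1
      funext n
      congr 1
      omega
    rw [h3]
    apply Subalgebra.prod_mem
    intro j _
    exact CFA_E_iter_mem _
      (germ_CFA_of_isCFinite (isCFinite_tauSeq s t _ _ (hca (Fin.last s)) hct))

set_option synthInstance.maxHeartbeats 1000000 in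
set_option maxHeartbeats 1000000 in
lemma combine (u v : ℕ → ℂ) (s t : ℕ) (cu : Fin s → ℕ → ℂ) (cv : Fin t → ℕ → ℂ)
    (hcu : ∀ i, IsCFinite (cu i)) (hcv : ∀ j, IsCFinite (cv j))
    (hu : ∀ n, s ≤ n → u (n + s) = ∑ i : Fin s, cu i n * u (n + (i : ℕ)))
    (hv : ∀ n, t ≤ n → v (n + t) = ∑ j : Fin t, cv j n * v (n + (j : ℕ))) :
    ∃ (K N : ℕ) (mk : Fin (K + 1) → ℕ → ℂ), (∀ k, IsCFinite (mk k)) ∧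
      ∀ n, N ≤ n → (fun m => u m + v m) (n + (K + 1))
        = ∑ k : Fin (K + 1), mk k n * (fun m => u m + v m) (n + (k : ℕ)) := by
  classical
  set w : ℕ → ℂ := fun m => u m + v m with hw
  set cg : Fin s → G := fun i => (↑(cu i) : G) with hcg
  set dg : Fin t → G := fun j => (↑(cv j) : G) with hdg
  -- germ-level monic recurrences
  have hu₀ : E^[s] (↑u : G) = ∑ i : Fin s, cg i * E^[(i : ℕ)] (↑u : G) := by
    rw [E_iter_coe]
    have h1 : ∑ i : Fin s, cg i * E^[(i : ℕ)] (↑u : G)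
        = (↑(fun n => ∑ i : Fin s, cu i n * u (n + (i : ℕ))) : G) := by
      rw [germ_sum]
      apply Finset.sum_congr rfl
      intro i _
      rw [hcg, E_iter_coe]
      rfl
    rw [h1]
    apply Filter.Germ.coe_eq.mpr
    filter_upwards [eventually_ge_atTop s] with n hn
    exact hu n hn
  have hv₀ : E^[t] (↑v : G) = ∑ j : Fin t, dg j * E^[(j : ℕ)] (↑v : G) := by
    rw [E_iter_coe]
    have h1 : ∑ j : Fin t, dg j * E^[(j : ℕ)] (↑v : G)
        = (↑(fun n => ∑ j : Fin t, cv j n * v (n + (j : ℕ))) : G) := by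
      rw [germ_sum]
      apply Finset.sum_congr rfl
      intro j _
      rw [hdg, E_iter_coe]
      rfl
    rw [h1]
    apply Filter.Germ.coe_eq.mpr
    filter_upwards [eventually_ge_atTop t] with n hn
    exact hv n hn
  -- the finitely generated shift-stable algebra R₀
  set fam : Fin s ⊕ Fin t → G := Sum.elim cg dg with hfam_def
  have hfam : ∀ x, IsCFG (fam x) := by
    rintro (i | j)
    · exact germ_CFA_of_isCFinite (hcu i)
    · exact germ_CFA_of_isCFinite (hcv j)
  choose V hFG hmem hstab using hfam
  choose Tset hTset using hFG
  set Y : Finset G := Finset.univ.biUnion Tset with hY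
  set R₀ : Subalgebra ℂ G := Algebra.adjoin ℂ (↑Y : Set G) with hR₀
  have hVle : ∀ x, V x ≤ Subalgebra.toSubmodule R₀ := by
    intro x
    rw [← hTset x]
    apply Submodule.span_le.mpr
    intro y hy
    apply Algebra.subset_adjoin
    exact Finset.mem_coe.mpr (Finset.mem_biUnion.mpr ⟨x, Finset.mem_univ x, hy⟩)
  have hfamR : ∀ x, fam x ∈ R₀ := fun x => hVle x (hmem x)
  have hER : ∀ g ∈ R₀, E g ∈ R₀ := by
    intro g hg
    induction hg using Algebra.adjoin_induction with
    | mem y hy =>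
      obtain ⟨x, _, hyx⟩ := Finset.mem_biUnion.mp hy
      have h1 : y ∈ V x := by rw [← hTset x]; exact Submodule.subset_span hyx
      exact hVle x (hstab x y h1)
    | algebraMap r =>
      have : E (algebraMap ℂ G r) = algebraMap ℂ G r := rfl
      rw [this]
      exact Subalgebra.algebraMap_mem R₀ r
    | add x y hx hy ihx ihy => rw [E_add]; exact add_mem ihx ihy
    | mul x y hx hy ihx ihy => rw [E_mul]; exact mul_mem ihx ihy
  have hR₀CFA : ∀ g ∈ R₀, g ∈ CFA := by
    intro g hg
    refine Algebra.adjoin_le ?_ hg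
    intro y hy
    obtain ⟨x, _, hyx⟩ := Finset.mem_biUnion.mp hy
    have h1 : y ∈ V x := by rw [← hTset x]; exact Submodule.subset_span hyx
    exact ⟨V x, ⟨Tset x, hTset x⟩, h1, hstab x⟩
  -- Noetherian setup
  haveI hFT : Algebra.FiniteType ℂ ↥R₀ :=
    (Subalgebra.fg_iff_finiteType R₀).mp (by rw [hR₀]; exact Subalgebra.fg_adjoin_finset Y)
  haveI hNR : IsNoetherianRing ↥R₀ := Algebra.FiniteType.isNoetherianRing ℂ ↥R₀
  haveI hNN : IsNoetherian ↥R₀ ↥R₀ := isNoetherianRing_iff.mp hNR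
  -- the vectors
  set AA : ℕ → Fin s → G := Avec s (fun i m => E^[m] (cg i)) with hAA
  set BB : ℕ → Fin t → G := Avec t (fun j m => E^[m] (dg j)) with hBB
  have memA : ∀ k i, AA k i ∈ R₀ := fun k i =>
    Avec_mem R₀ hER s cg (fun i' => hfamR (Sum.inl i')) k i
  have memB : ∀ k j, BB k j ∈ R₀ := fun k j =>
    Avec_mem R₀ hER t dg (fun j' => hfamR (Sum.inr j')) k j
  set VV : ℕ → (Fin s → ↥R₀) × (Fin t → ↥R₀) := fun k =>
    (fun i => ⟨AA k i, memA k i⟩, fun j => ⟨BB k j, memB k j⟩) with hVV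
  -- stabilization
  have mono : Monotone (fun k => Submodule.span ↥R₀
      (Set.range (fun i : Fin (k + 1) => VV (i : ℕ)))) := by
    intro k k' hk
    apply Submodule.span_mono
    rintro _ ⟨i, rfl⟩
    exact ⟨⟨(i : ℕ), by omega⟩, rfl⟩
  obtain ⟨K, hK⟩ := monotone_stabilizes_iff_noetherian.mpr inferInstance ⟨_, mono⟩
  have h1 : VV (K + 1) ∈ Submodule.span ↥R₀
      (Set.range (fun i : Fin (K + 1 + 1) => VV (i : ℕ))) :=
    Submodule.subset_span ⟨⟨K + 1, by omega⟩, rfl⟩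
  have h2 := hK (K + 1) (Nat.le_succ K)
  simp only [OrderHom.coe_mk] at h2
  rw [← h2] at h1
  rw [Submodule.mem_span_range_iff_exists_fun] at h1
  obtain ⟨μ, hμ⟩ := h1
  -- project to components
  have compA : ∀ i : Fin s, AA (K + 1) i = ∑ k : Fin (K + 1), ((μ k : ↥R₀) : G) * AA (k : ℕ) i := by
    intro i
    have e1 := congrArg (fun z : (Fin s → ↥R₀) × (Fin t → ↥R₀) => ((z.1 i : ↥R₀) : G)) hμ
    simp only [Prod.fst_sum, Finset.sum_apply, Pi.smul_apply, smul_eq_mul] at e1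
    refine e1.symm.trans ?_
    push_cast
    rfl
  have compB : ∀ j : Fin t, BB (K + 1) j = ∑ k : Fin (K + 1), ((μ k : ↥R₀) : G) * BB (k : ℕ) j := by
    intro j
    have e1 := congrArg (fun z : (Fin s → ↥R₀) × (Fin t → ↥R₀) => ((z.2 j : ↥R₀) : G)) hμ
    simp only [Prod.snd_sum, Finset.sum_apply, Pi.smul_apply, smul_eq_mul] at e1
    refine e1.symm.trans ?_
    push_cast
    rfl
  -- expansion of shifts of w
  have hexp : ∀ k, E^[k] (↑w : G)
      = ∑ i : Fin s, AA k i * E^[(i : ℕ)] (↑u : G)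
        + ∑ j : Fin t, BB k j * E^[(j : ℕ)] (↑v : G) := by
    intro k
    have hwg : (↑w : G) = (↑u : G) + (↑v : G) := rfl
    rw [hwg, E_iter_add, Avec_expand s cg (↑u : G) hu₀ k, Avec_expand t dg (↑v : G) hv₀ k]
  have hfin : E^[K + 1] (↑w : G) = ∑ k : Fin (K + 1), ((μ k : ↥R₀) : G) * E^[(k : ℕ)] (↑w : G) := by
    rw [hexp (K + 1)]
    have r1 : ∀ k : Fin (K + 1), ((μ k : ↥R₀) : G) * E^[(k : ℕ)] (↑w : G)
        = (∑ i : Fin s, ((μ k : ↥R₀) : G) * (AA (k : ℕ) i * E^[(i : ℕ)] (↑u : G)))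
          + ∑ j : Fin t, ((μ k : ↥R₀) : G) * (BB (k : ℕ) j * E^[(j : ℕ)] (↑v : G)) := by
      intro k
      rw [hexp (k : ℕ), mul_add, Finset.mul_sum, Finset.mul_sum]
    rw [Finset.sum_congr rfl (fun k _ => r1 k), Finset.sum_add_distrib]
    congr 1
    · rw [Finset.sum_comm]
      apply Finset.sum_congr rfl
      intro i _
      rw [compA i, Finset.sum_mul]
      apply Finset.sum_congr rfl
      intro k _
      ring
    · rw [Finset.sum_comm]
      apply Finset.sum_congr rfl
      intro j _
      rw [compB j, Finset.sum_mul]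
      apply Finset.sum_congr rfl
      intro k _
      ring
  -- back to sequences
  set mk : Fin (K + 1) → ℕ → ℂ := fun k => Quotient.out ((μ k : ↥R₀) : G) with hmk
  have hmkg : ∀ k, (↑(mk k) : G) = ((μ k : ↥R₀) : G) := fun k => Quotient.out_eq _
  have hmkCF : ∀ k, IsCFinite (mk k) := by
    intro k
    apply isCFinite_of_germ_CFA
    rw [hmkg k]
    exact hR₀CFA _ (μ k).2
  have hrel : (↑(fun n => w (n + (K + 1))) : G)
      = (↑(fun n => ∑ k : Fin (K + 1), mk k n * w (n + (k : ℕ))) : G) := by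
    rw [← E_iter_coe, hfin, germ_sum]
    apply Finset.sum_congr rfl
    intro k _
    rw [← hmkg k, E_iter_coe]
    rfl
  have hev := Filter.Germ.coe_eq.mp hrel
  rw [Filter.EventuallyEq, eventually_atTop] at hev
  obtain ⟨N, hN⟩ := hev
  exact ⟨K, N, mk, hmkCF, hN⟩

lemma isCFinite_mul {x y : ℕ → ℂ} (hx : IsCFinite x) (hy : IsCFinite y) :
    IsCFinite (fun n => x n * y n) := by
  rw [isCFinite_iff_germ]
  have h0 : (↑(fun n => x n * y n) : G) = (↑x : G) * (↑y : G) := rfl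
  rw [h0]
  exact CFA.mul_mem (germ_CFA_of_isCFinite hx) (germ_CFA_of_isCFinite hy)

lemma isCFinite_shift {x : ℕ → ℂ} (hx : IsCFinite x) (d : ℕ) :
    IsCFinite (fun n => x (n + d)) := by
  rw [isCFinite_iff_germ]
  rw [show (↑(fun n => x (n + d)) : G) = E^[d] (↑x : G) from (E_iter_coe x d).symm]
  exact CFA_E_iter_mem d (germ_CFA_of_isCFinite hx)

lemma isCFinite_shift_prod {f : ℕ → ℂ} (hf : IsCFinite f) (d k : ℕ) :
    IsCFinite (fun n => ∏ j ∈ Finset.range k, f (n + d + j)) := by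
  rw [isCFinite_iff_germ]
  have h1 : (↑(fun n => ∏ j ∈ Finset.range k, f (n + d + j)) : G)
      = ∏ j ∈ Finset.range k, E^[d + j] (↑f : G) := by
    rw [germ_prod]
    apply Finset.prod_congr rfl
    intro j _
    rw [E_iter_coe]
    congr 1
    funext n
    congr 1
    omega
  rw [h1]
  exact Subalgebra.prod_mem _ fun j _ => CFA_E_iter_mem _ (germ_CFA_of_isCFinite hf)


theorem c2finite_add (a b : ℕ → ℂ) (ha : IsC2Finite a) (hb : IsC2Finite b) :
    IsC2Finite (fun n => a n + b n) := by
  classical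
  obtain ⟨s, ca, hcaCF, hcaNZ, hrecA⟩ := ha
  obtain ⟨t, cb, hcbCF, hcbNZ, hrecB⟩ := hb
  rcases Nat.eq_zero_or_pos s with hs0 | hs
  · subst hs0
    have hA : ∀ n, a n = 0 := by
      intro n
      have h := hrecA n (Nat.zero_le n)
      simp only [Finset.univ_eq_empty, Finset.sum_empty, Nat.add_zero] at h
      exact (mul_eq_zero.mp h).resolve_left (hcaNZ n)
    have heq : (fun n => a n + b n) = b := funext fun n => by rw [hA n, zero_add]
    rw [heq]
    exact ⟨t, cb, hcbCF, hcbNZ, hrecB⟩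
  rcases Nat.eq_zero_or_pos t with ht0 | ht
  · subst ht0
    have hB : ∀ n, b n = 0 := by
      intro n
      have h := hrecB n (Nat.zero_le n)
      simp only [Finset.univ_eq_empty, Finset.sum_empty, Nat.add_zero] at h
      exact (mul_eq_zero.mp h).resolve_left (hcbNZ n)
    have heq : (fun n => a n + b n) = a := funext fun n => by rw [hB n, add_zero]
    rw [heq]
    exact ⟨s, ca, hcaCF, hcaNZ, hrecA⟩
  -- main case
  have hτNZ : ∀ m, tauSeq s t (ca (Fin.last s)) (cb (Fin.last t)) m ≠ 0 :=
    tauSeq_ne_zero s t _ _ hcaNZ hcbNZ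
  have hTNZ : ∀ n, TT s t (ca (Fin.last s)) (cb (Fin.last t)) n ≠ 0 :=
    TT_ne_zero s t _ _ hcaNZ hcbNZ
  have hτCF : IsCFinite (tauSeq s t (ca (Fin.last s)) (cb (Fin.last t))) :=
    isCFinite_tauSeq s t _ _ (hcaCF _) (hcbCF _)
  have hu : ∀ n, s ≤ n →
      (fun m => TT s t (ca (Fin.last s)) (cb (Fin.last t)) m * a m) (n + s)
        = ∑ i : Fin s, chat s t ca (cb (Fin.last t)) i n
            * (fun m => TT s t (ca (Fin.last s)) (cb (Fin.last t)) m * a m) (n + (i : ℕ)) :=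
    fun n hn => monic_rec s t hs ca (cb (Fin.last t)) a hcaNZ hrecA n hn
  have hv : ∀ n, t ≤ n →
      (fun m => TT s t (ca (Fin.last s)) (cb (Fin.last t)) m * b m) (n + t)
        = ∑ j : Fin t, chat t s cb (ca (Fin.last s)) j n
            * (fun m => TT s t (ca (Fin.last s)) (cb (Fin.last t)) m * b m) (n + (j : ℕ)) := by
    intro n hn
    have h := monic_rec t s ht cb (ca (Fin.last s)) b hcbNZ hrecB n hn
    rw [TT_comm s t (ca (Fin.last s)) (cb (Fin.last t))] at h
    exact h
  obtain ⟨K, N, mk, hmkCF, hrel⟩ := combine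
      (fun m => TT s t (ca (Fin.last s)) (cb (Fin.last t)) m * a m)
      (fun m => TT s t (ca (Fin.last s)) (cb (Fin.last t)) m * b m)
      s t (chat s t ca (cb (Fin.last t))) (chat t s cb (ca (Fin.last s)))
      (fun i => chat_CFA s t ca (cb (Fin.last t)) hcaCF (hcbCF (Fin.last t)) i)
      (fun j => chat_CFA t s cb (ca (Fin.last s)) hcbCF (hcaCF (Fin.last s)) j)
      hu hv
  set S := max (K + 1) N with hS
  have hSK : K + 1 ≤ S := le_max_left _ _
  have hSN : N ≤ S := le_max_right _ _
  set δ := S - (K + 1) with hδ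
  have hδS : δ + (K + 1) = S := by omega
  set mkx : ℕ → ℕ → ℂ := (fun k => if h : k < K + 1 then mk ⟨k, h⟩ else (fun _ => 0)) with hmkx
  have hmkeq : ∀ k : Fin (K + 1), mkx (k : ℕ) = mk k := by
    intro k
    rw [hmkx]
    simp only [Fin.is_lt, dif_pos, Fin.eta]
  set cIf : ℕ → ℕ → ℂ := (fun x => if x = S then
        (fun n => ∏ j ∈ Finset.range (K + 1), tauSeq s t (ca (Fin.last s)) (cb (Fin.last t)) (n + δ + j))
      else if δ ≤ x then
        (fun n => mkx (x - δ) (n + δ) * ∏ j ∈ Finset.range (x - δ), tauSeq s t (ca (Fin.last s)) (cb (Fin.last t)) (n + δ + j))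
      else (fun _ => 0)) with hcIf
  have hlastv : cIf S = fun m => ∏ j ∈ Finset.range (K + 1), tauSeq s t (ca (Fin.last s)) (cb (Fin.last t)) (m + δ + j) := by
    rw [hcIf]
    simp
  have hmidv : ∀ x, δ ≤ x → x < S → cIf x
      = fun m => mkx (x - δ) (m + δ) * ∏ j ∈ Finset.range (x - δ), tauSeq s t (ca (Fin.last s)) (cb (Fin.last t)) (m + δ + j) := by
    intro x h1 h2
    rw [hcIf]
    simp only
    rw [if_neg (by omega), if_pos h1]
  have hlowv : ∀ x, x < δ → cIf x = fun _ => 0 := by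
    intro x h1
    rw [hcIf]
    simp only
    rw [if_neg (by omega), if_neg (by omega)]
  refine ⟨S, fun i => cIf (i : ℕ), ?_, ?_, ?_⟩
  · intro i
    show IsCFinite (cIf (i : ℕ))
    rcases Nat.lt_trichotomy (i : ℕ) δ with h1 | h1 | h1
    · rw [hlowv _ h1]
      exact isCFinite_zero
    all_goals rcases eq_or_ne (i : ℕ) S with h2 | h2
    · rw [h2, hlastv]
      exact isCFinite_shift_prod hτCF δ (K + 1)
    · rw [hmidv _ (by omega) (by have := i.isLt; omega)]
      apply isCFinite_mul
      · by_cases h3 : (i : ℕ) - δ < K + 1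
        · have h4 : mkx ((i : ℕ) - δ) = mk ⟨(i : ℕ) - δ, h3⟩ := by
            rw [hmkx]; simp only [dif_pos h3]
          rw [h4]
          exact isCFinite_shift (hmkCF _) δ
        · have h4 : mkx ((i : ℕ) - δ) = fun _ => 0 := by
            rw [hmkx]; simp only [dif_neg h3]
          rw [h4]
          exact isCFinite_zero
      · exact isCFinite_shift_prod hτCF δ _
    · rw [h2, hlastv]
      exact isCFinite_shift_prod hτCF δ (K + 1)
    · rw [hmidv _ (by omega) (by have := i.isLt; omega)]
      apply isCFinite_mul
      · by_cases h3 : (i : ℕ) - δ < K + 1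
        · have h4 : mkx ((i : ℕ) - δ) = mk ⟨(i : ℕ) - δ, h3⟩ := by
            rw [hmkx]; simp only [dif_pos h3]
          rw [h4]
          exact isCFinite_shift (hmkCF _) δ
        · have h4 : mkx ((i : ℕ) - δ) = fun _ => 0 := by
            rw [hmkx]; simp only [dif_neg h3]
          rw [h4]
          exact isCFinite_zero
      · exact isCFinite_shift_prod hτCF δ _
  · intro n
    show cIf ((Fin.last S : Fin (S + 1)) : ℕ) n ≠ 0
    rw [Fin.val_last, hlastv]
    exact Finset.prod_ne_zero_iff.mpr fun j _ => hτNZ _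
  · intro n hn
    show cIf ((Fin.last S : Fin (S + 1)) : ℕ) n * (a (n + S) + b (n + S))
        = ∑ i : Fin S, cIf ((i.castSucc : Fin (S + 1)) : ℕ) n * (a (n + (i : ℕ)) + b (n + (i : ℕ)))
    simp only [Fin.val_last, Fin.coe_castSucc]
    apply mul_left_cancel₀ (hTNZ (n + δ))
    have hcore := hrel (n + δ) (by omega)
    simp only [] at hcore
    have step1 : TT s t (ca (Fin.last s)) (cb (Fin.last t)) (n + δ) * (cIf S n * (a (n + S) + b (n + S)))
        = TT s t (ca (Fin.last s)) (cb (Fin.last t)) (n + δ + (K + 1)) * a (n + δ + (K + 1))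
          + TT s t (ca (Fin.last s)) (cb (Fin.last t)) (n + δ + (K + 1)) * b (n + δ + (K + 1)) := by
      rw [hlastv]
      simp only
      rw [show n + S = n + δ + (K + 1) by omega, TT_add s t _ _ (n + δ) (K + 1)]
      ring
    have step2 : ∑ k : Fin (K + 1), mk k (n + δ) *
          (TT s t (ca (Fin.last s)) (cb (Fin.last t)) (n + δ + (k : ℕ)) * a (n + δ + (k : ℕ))
            + TT s t (ca (Fin.last s)) (cb (Fin.last t)) (n + δ + (k : ℕ)) * b (n + δ + (k : ℕ)))
        = ∑ x ∈ Finset.range (K + 1),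
            TT s t (ca (Fin.last s)) (cb (Fin.last t)) (n + δ) * (cIf (δ + x) n * (a (n + (δ + x)) + b (n + (δ + x)))) := by
      rw [← Fin.sum_univ_eq_sum_range (fun x =>
            TT s t (ca (Fin.last s)) (cb (Fin.last t)) (n + δ) * (cIf (δ + x) n * (a (n + (δ + x)) + b (n + (δ + x))))) (K + 1)]
      apply Finset.sum_congr rfl
      intro x _
      rw [hmidv (δ + (x : ℕ)) (by omega) (by have := x.isLt; omega)]
      simp only
      rw [show δ + (x : ℕ) - δ = (x : ℕ) by omega, hmkeq x]
      rw [show n + (δ + (x : ℕ)) = n + δ + (x : ℕ) by omega, TT_add s t _ _ (n + δ) (x : ℕ)]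
      ring
    have step3 : ∑ i : Fin S, TT s t (ca (Fin.last s)) (cb (Fin.last t)) (n + δ) * (cIf (i : ℕ) n * (a (n + (i : ℕ)) + b (n + (i : ℕ))))
        = ∑ x ∈ Finset.range (K + 1),
            TT s t (ca (Fin.last s)) (cb (Fin.last t)) (n + δ) * (cIf (δ + x) n * (a (n + (δ + x)) + b (n + (δ + x)))) := by
      rw [Fin.sum_univ_eq_sum_range (fun x =>
            TT s t (ca (Fin.last s)) (cb (Fin.last t)) (n + δ) * (cIf x n * (a (n + x) + b (n + x)))) S]
      rw [show S = δ + (K + 1) from hδS.symm]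
      rw [Finset.sum_range_add]
      have hz : ∑ x ∈ Finset.range δ,
          TT s t (ca (Fin.last s)) (cb (Fin.last t)) (n + δ) * (cIf x n * (a (n + x) + b (n + x))) = 0 := by
        apply Finset.sum_eq_zero
        intro x hx
        rw [hlowv x (Finset.mem_range.mp hx)]
        simp
      rw [hz, zero_add]
    rw [step1, hcore, Finset.mul_sum]
    rw [step3, ← step2]
end
end
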